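/- arXiv:2512.18378 — 6 statements merged into one kernel-verified Lean document; each statement's English description precedes it below -/
import Mathlib

section
/- For every n ≥ 6, any two strong 2-central (bicentral) 2-trees on n vertices with tail set {2,3} and exactly two degree-3 tail vertices are isomorphic; that is, such a graph is unique up to isomorphism. -/
open SimpleGraph

/-- `IsTwoTree G` : `G` is a 2-tree, i.e. it can be built recursively starting from the
complete graph `K₃` by repeatedly adding a new vertex adjacent exactly to the two
endpoints of an existing edge.  This is encoded via a construction ordering of the
vertices: the first three vertices form a triangle, and every later vertex has exactly
two earlier neighbors, which are adjacent. -/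
def IsTwoTree {V : Type} [Fintype V] (G : SimpleGraph V) : Prop :=
  3 ≤ Fintype.card V ∧
  ∃ e : Fin (Fintype.card V) ≃ V,
    (∀ i j : Fin (Fintype.card V), i.val < 3 → j.val < 3 → i ≠ j → G.Adj (e i) (e j)) ∧
    (∀ k : Fin (Fintype.card V), 3 ≤ k.val →
      ∃ i j : Fin (Fintype.card V), i.val < k.val ∧ j.val < k.val ∧ i ≠ j ∧
        G.Adj (e i) (e j) ∧
        ∀ m : Fin (Fintype.card V), m.val < k.val →
          (G.Adj (e k) (e m) ↔ m = i ∨ m = j))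

/-- The degree of a vertex. -/
noncomputable def gdeg {V : Type} [Fintype V] (G : SimpleGraph V) (v : V) : ℕ :=
  (G.neighborSet v).ncard

/-- `IsStrongCentral G r Δ` : `G` is a strong `r`-central 2-tree with maximum degree `Δ`
and tail set `{2,3}` :  `G` is a 2-tree, `Δ` is the maximum degree, exactly `r` vertices
have degree `Δ`, these `r` core vertices induce a complete graph, and every remaining
(tail) vertex has degree 2 or 3. -/
def IsStrongCentral {V : Type} [Fintype V] (G : SimpleGraph V) (r Δ : ℕ) : Prop :=
  IsTwoTree G ∧
  (∀ v, gdeg G v ≤ Δ) ∧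
  ({v | gdeg G v = Δ}).ncard = r ∧
  (∀ u v, gdeg G u = Δ → gdeg G v = Δ → u ≠ v → G.Adj u v) ∧
  (∀ v, gdeg G v ≠ Δ → gdeg G v = 2 ∨ gdeg G v = 3)

/-- The number `x` of tail vertices of degree 3. -/
noncomputable def tail3 {V : Type} [Fintype V] (G : SimpleGraph V) (Δ : ℕ) : ℕ :=
  ({v | gdeg G v ≠ Δ ∧ gdeg G v = 3}).ncard

/-- The number `y` of tail vertices of degree 2. -/
noncomputable def tail2 {V : Type} [Fintype V] (G : SimpleGraph V) (Δ : ℕ) : ℕ :=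
  ({v | gdeg G v ≠ Δ ∧ gdeg G v = 2}).ncard


section Helpers
open Finset

lemma gdeg_eq_degree {V : Type} [Fintype V] (G : SimpleGraph V) [DecidableRel G.Adj] (v : V) :
    gdeg G v = G.degree v := by
  rw [gdeg, Set.ncard_eq_toFinset_card', SimpleGraph.degree]
  congr 1

lemma twoTree_triangle {V : Type} [Fintype V] (G : SimpleGraph V) (hT : IsTwoTree G)
    {x y : V} (hxy : G.Adj x y) : ∃ z, G.Adj x z ∧ G.Adj y z := by
  obtain ⟨hN, e, htri, hrec⟩ := hT
  -- reduce to index version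
  suffices h : ∀ i j : Fin (Fintype.card V), i.val < j.val → G.Adj (e i) (e j) →
      ∃ z, G.Adj (e i) z ∧ G.Adj (e j) z by
    set i := e.symm x with hi
    set j := e.symm y with hj
    have hx : e i = x := e.apply_symm_apply x
    have hy : e j = y := e.apply_symm_apply y
    have hij : i ≠ j := by
      intro hh
      apply G.ne_of_adj hxy
      rw [← hx, ← hy, hh]
    rcases lt_or_gt_of_ne (fun hh : i.val = j.val => hij (Fin.ext hh)) with hlt | hlt
    · obtain ⟨z, hz1, hz2⟩ := h i j hlt (by rwa [hx, hy])
      exact ⟨z, by rwa [hx] at hz1, by rwa [hy] at hz2⟩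
    · obtain ⟨z, hz1, hz2⟩ := h j i hlt (by rw [hx, hy]; exact hxy.symm)
      exact ⟨z, by rwa [hx] at hz2, by rwa [hy] at hz1⟩
  intro i j hlt hadj
  by_cases hj3 : j.val < 3
  · have hi3 : i.val < 3 := lt_trans hlt hj3
    have ht : 3 - i.val - j.val < 3 := by omega
    set k : Fin (Fintype.card V) := ⟨3 - i.val - j.val, lt_of_lt_of_le ht hN⟩ with hk
    have hki : k ≠ i := by
      intro hh; have := congrArg Fin.val hh; simp [hk] at this; omega
    have hkj : k ≠ j := by
      intro hh; have := congrArg Fin.val hh; simp [hk] at this; omega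
    have hkv : k.val < 3 := ht
    exact ⟨e k, htri i k hi3 hkv (Ne.symm hki), htri j k hj3 hkv (Ne.symm hkj)⟩
  · obtain ⟨i', j', hi', hj', hne, hadj', hiff⟩ := hrec j (by omega)
    have : i = i' ∨ i = j' := (hiff i hlt).1 hadj.symm
    rcases this with rfl | rfl
    · exact ⟨e j', hadj', ((hiff j' hj').2 (Or.inr rfl))⟩
    · exact ⟨e i', hadj'.symm, ((hiff i' hi').2 (Or.inl rfl))⟩

lemma twoTree_sum_degrees {V : Type} [Fintype V] (G : SimpleGraph V) [DecidableRel G.Adj]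
    (hT : IsTwoTree G) : ∑ v, G.degree v = 4 * Fintype.card V - 6 := by
  classical
  obtain ⟨hN, e, htri, hrec⟩ := hT
  -- below k
  set below : Fin (Fintype.card V) → ℕ := fun k => (univ.filter (fun m => m < k ∧ G.Adj (e k) (e m))).card with hbelow
  set above : Fin (Fintype.card V) → ℕ := fun k => (univ.filter (fun m => k < m ∧ G.Adj (e k) (e m))).card with habove
  have hdeg : ∀ k : Fin (Fintype.card V), G.degree (e k) = below k + above k := by
    intro k
    have h1 : G.neighborFinset (e k) = (univ.filter (fun m => m < k ∧ G.Adj (e k) (e m))).image e ∪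
        (univ.filter (fun m => k < m ∧ G.Adj (e k) (e m))).image e := by
      ext w
      simp only [mem_neighborFinset, Finset.mem_union, Finset.mem_image, Finset.mem_filter,
        Finset.mem_univ, true_and]
      constructor
      · intro h
        rcases lt_trichotomy (e.symm w) k with hc | hc | hc
        · exact Or.inl ⟨e.symm w, ⟨hc, by rwa [e.apply_symm_apply]⟩, e.apply_symm_apply w⟩
        · exfalso; apply G.ne_of_adj h; rw [← e.apply_symm_apply w, hc]
        · exact Or.inr ⟨e.symm w, ⟨hc, by rwa [e.apply_symm_apply]⟩, e.apply_symm_apply w⟩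
      · rintro (⟨m, ⟨_, hm⟩, rfl⟩ | ⟨m, ⟨_, hm⟩, rfl⟩) <;> exact hm
    rw [SimpleGraph.degree, h1, Finset.card_union_of_disjoint, Finset.card_image_of_injective _ e.injective,
      Finset.card_image_of_injective _ e.injective]
    · rw [Finset.disjoint_left]
      intro w hw1 hw2
      simp only [Finset.mem_image, Finset.mem_filter, Finset.mem_univ, true_and] at hw1 hw2
      obtain ⟨m, ⟨hm1, _⟩, rfl⟩ := hw1
      obtain ⟨m', ⟨hm1', _⟩, hmm⟩ := hw2
      have hee : m' = m := e.injective hmm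
      subst hee; exact absurd hm1 (not_lt.mpr (le_of_lt hm1'))
  -- the pair set
  set D : Finset (Fin (Fintype.card V) × Fin (Fintype.card V)) := univ.filter (fun p => p.1 < p.2 ∧ G.Adj (e p.1) (e p.2)) with hD
  have hDb : D.card = ∑ k : Fin (Fintype.card V), below k := by
    rw [Finset.card_eq_sum_card_fiberwise (f := Prod.snd) (t := univ) (fun x _ => mem_univ _)]
    apply Finset.sum_congr rfl
    intro k _
    rw [hbelow]
    apply Finset.card_bij (fun p _ => p.1)
    · rintro ⟨p1, p2⟩ hp
      simp only [Finset.mem_filter, Finset.mem_univ, true_and, hD] at hp ⊢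
      obtain ⟨⟨h1, h2⟩, h3⟩ := hp
      subst h3
      exact ⟨h1, h2.symm⟩
    · rintro ⟨p1, p2⟩ hp ⟨q1, q2⟩ hq h
      simp only [Finset.mem_filter, Finset.mem_univ, true_and, hD] at hp hq
      simp only at h
      subst h
      rw [hp.2, hq.2]
    · intro m hm
      simp only [Finset.mem_filter, Finset.mem_univ, true_and] at hm
      exact ⟨(m, k), by simp [hD, hm.1, hm.2.symm], rfl⟩
  have hDa : D.card = ∑ k : Fin (Fintype.card V), above k := by
    rw [Finset.card_eq_sum_card_fiberwise (f := Prod.fst) (t := univ) (fun x _ => mem_univ _)]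
    apply Finset.sum_congr rfl
    intro k _
    rw [habove]
    apply Finset.card_bij (fun p _ => p.2)
    · rintro ⟨p1, p2⟩ hp
      simp only [Finset.mem_filter, Finset.mem_univ, true_and, hD] at hp ⊢
      obtain ⟨⟨h1, h2⟩, h3⟩ := hp
      subst h3
      exact ⟨h1, h2⟩
    · rintro ⟨p1, p2⟩ hp ⟨q1, q2⟩ hq h
      simp only [Finset.mem_filter, Finset.mem_univ, true_and, hD] at hp hq
      simp only at h
      subst h
      rw [hp.2, hq.2]
    · intro m hm
      simp only [Finset.mem_filter, Finset.mem_univ, true_and] at hm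
      exact ⟨(k, m), by simp [hD, hm.1, hm.2], rfl⟩
  -- below k value
  have hbval : ∀ k : Fin (Fintype.card V), below k = if k.val < 3 then k.val else 2 := by
    intro k
    by_cases hk3 : k.val < 3
    · rw [if_pos hk3]; simp only [hbelow]
      have : (univ.filter (fun m => m < k ∧ G.Adj (e k) (e m))) = univ.filter (fun m => m < k) := by
        ext m
        simp only [Finset.mem_filter, Finset.mem_univ, true_and, and_iff_left_iff_imp]
        intro hm
        have hmk : m.val < k.val := hm
        have hm3 : m.val < 3 := lt_trans hmk hk3
        exact htri k m hk3 hm3 (fun hh => by subst hh; exact lt_irrefl _ hm)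
      rw [this]
      have : univ.filter (fun m => m < k) = Finset.Iio k := by ext m; simp
      rw [this, Fin.card_Iio]
    · rw [if_neg hk3]; simp only [hbelow]
      obtain ⟨i, j, hi, hj, hne, hadj, hiff⟩ := hrec k (by omega)
      have : (univ.filter (fun m => m < k ∧ G.Adj (e k) (e m))) = {i, j} := by
        ext m
        simp only [Finset.mem_filter, Finset.mem_univ, true_and, Finset.mem_insert,
          Finset.mem_singleton]
        constructor
        · rintro ⟨h1, h2⟩
          exact (hiff m h1).1 h2
        · rintro (rfl | rfl)
          · exact ⟨hi, (hiff m hi).2 (Or.inl rfl)⟩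
          · exact ⟨hj, (hiff m hj).2 (Or.inr rfl)⟩
      rw [this, Finset.card_insert_of_notMem (by simpa using hne), Finset.card_singleton]
  -- sum below = 2N - 3
  have hsumb : (∑ k : Fin (Fintype.card V), below k) + 3 = 2 * Fintype.card V := by
    have k0 : Fin (Fintype.card V) := ⟨0, by omega⟩
    have : ∀ k : Fin (Fintype.card V), below k + ((if k = ⟨0, by omega⟩ then 2 else 0) +
        (if k = ⟨1, by omega⟩ then 1 else 0)) = 2 := by
      intro k
      rw [hbval k]
      by_cases h0 : k = ⟨0, by omega⟩
      · subst h0; simp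
      · by_cases h1 : k = ⟨1, by omega⟩
        · subst h1; simp
        · rw [if_neg h0, if_neg h1]
          have hv0 : k.val ≠ 0 := fun hh => h0 (Fin.ext hh)
          have hv1 : k.val ≠ 1 := fun hh => h1 (Fin.ext hh)
          by_cases h3 : k.val < 3
          · rw [if_pos h3]; omega
          · rw [if_neg h3]
      -- done
    calc (∑ k : Fin (Fintype.card V), below k) + 3
        = (∑ k : Fin (Fintype.card V), below k) + ((∑ k : Fin (Fintype.card V), if k = (⟨0, by omega⟩ : Fin (Fintype.card V)) then 2 else 0) +
            (∑ k : Fin (Fintype.card V), if k = (⟨1, by omega⟩ : Fin (Fintype.card V)) then 1 else 0)) := by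
          rw [Finset.sum_ite_eq' univ, Finset.sum_ite_eq' univ]
          simp
      _ = ∑ k : Fin (Fintype.card V), (below k + ((if k = ⟨0, by omega⟩ then 2 else 0) +
            (if k = ⟨1, by omega⟩ then 1 else 0))) := by
          rw [Finset.sum_add_distrib, Finset.sum_add_distrib]
      _ = ∑ k : Fin (Fintype.card V), 2 := Finset.sum_congr rfl (fun k _ => this k)
      _ = 2 * Fintype.card V := by simp [Finset.card_univ, mul_comm]
  have : ∑ v, G.degree v = ∑ k : Fin (Fintype.card V), G.degree (e k) := (Equiv.sum_comp e (fun v => G.degree v)).symm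
  rw [this]
  have : ∑ k : Fin (Fintype.card V), G.degree (e k) = ∑ k : Fin (Fintype.card V), (below k + above k) :=
    Finset.sum_congr rfl (fun k _ => hdeg k)
  rw [this, Finset.sum_add_distrib]
  omega

def Pred {α : Type} (u v a b c d x y : α) : Prop :=
  (x = u ∧ y ≠ u ∧ y ≠ a) ∨ (y = u ∧ x ≠ u ∧ x ≠ a) ∨
  (x = v ∧ y ≠ v ∧ y ≠ b) ∨ (y = v ∧ x ≠ v ∧ x ≠ b) ∨
  (x = a ∧ y = c) ∨ (x = c ∧ y = a) ∨ (x = b ∧ y = d) ∨ (x = d ∧ y = b)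

lemma card_filter_pair {α : Type} [DecidableEq α] {u v : α} (huv : u ≠ v) (p : α → Prop)
    [DecidablePred p] :
    (({u, v} : Finset α).filter p).card = (if p u then 1 else 0) + (if p v then 1 else 0) := by
  rw [Finset.filter_insert, Finset.filter_singleton]
  by_cases hu : p u <;> by_cases hv : p v <;>
    simp [hu, hv, huv]

lemma structure_lemma {V : Type} [Fintype V] (G : SimpleGraph V) [DecidableRel G.Adj]
    (n Δ : ℕ) (hn : 6 ≤ n) (hV : Fintype.card V = n)
    (hSC : IsStrongCentral G 2 Δ) (h3 : tail3 G Δ = 2) :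
    ∃ u v a b c d : V,
      (u ≠ v ∧ u ≠ a ∧ u ≠ b ∧ u ≠ c ∧ u ≠ d ∧ v ≠ a ∧ v ≠ b ∧ v ≠ c ∧ v ≠ d ∧
        a ≠ b ∧ a ≠ c ∧ a ≠ d ∧ b ≠ c ∧ b ≠ d ∧ c ≠ d) ∧
      ∀ x y, G.Adj x y ↔ Pred u v a b c d x y := by
  classical
  obtain ⟨hTT, hmax, hcore2, hcoreadj, htail⟩ := hSC
  have hdegiff : ∀ w, gdeg G w = G.degree w := gdeg_eq_degree G
  -- finset versions
  set C := Finset.univ.filter (fun w => G.degree w = Δ) with hCdef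
  have hC2 : C.card = 2 := by
    have h := hcore2
    have hseteq : {w | gdeg G w = Δ} = {w | G.degree w = Δ} := by ext w; simp [hdegiff]
    rw [hseteq, Set.ncard_eq_toFinset_card', Set.toFinset_setOf] at h
    exact h
  set T3 := Finset.univ.filter (fun w => G.degree w ≠ Δ ∧ G.degree w = 3) with hT3def
  have hT3 : T3.card = 2 := by
    have h := h3
    have hseteq : {w | gdeg G w ≠ Δ ∧ gdeg G w = 3} = {w | G.degree w ≠ Δ ∧ G.degree w = 3} := by
      ext w; simp [hdegiff]
    rw [tail3, hseteq, Set.ncard_eq_toFinset_card', Set.toFinset_setOf] at h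
    exact h
  set T2 := Finset.univ.filter (fun w => G.degree w ≠ Δ ∧ G.degree w = 2) with hT2def
  have hsum : ∑ w, G.degree w = 4 * n - 6 := by
    rw [twoTree_sum_degrees G hTT, hV]
  -- split the sum
  have hsplit1 : ∑ w ∈ C, G.degree w + ∑ w ∈ Finset.univ.filter (fun w => ¬ G.degree w = Δ), G.degree w
      = ∑ w, G.degree w := Finset.sum_filter_add_sum_filter_not Finset.univ _ _
  set R := Finset.univ.filter (fun w => ¬ G.degree w = Δ) with hRdef
  have hsplit2 : ∑ w ∈ R.filter (fun w => G.degree w = 3), G.degree w +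
      ∑ w ∈ R.filter (fun w => ¬ G.degree w = 3), G.degree w = ∑ w ∈ R, G.degree w :=
    Finset.sum_filter_add_sum_filter_not R _ _
  have hR3 : R.filter (fun w => G.degree w = 3) = T3 := by
    ext w; simp [hRdef, hT3def, and_comm]
  have hR2 : R.filter (fun w => ¬ G.degree w = 3) = T2 := by
    ext w
    simp only [hRdef, hT2def, Finset.mem_filter, Finset.mem_univ, true_and]
    constructor
    · rintro ⟨h1, h2⟩
      refine ⟨h1, ?_⟩
      rcases htail w (by rw [hdegiff]; exact h1) with h | h
      · rwa [hdegiff] at h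
      · rw [hdegiff] at h; exact absurd h h2
    · rintro ⟨h1, h2⟩; exact ⟨h1, by omega⟩
  have hsumC : ∑ w ∈ C, G.degree w = 2 * Δ := by
    rw [Finset.sum_congr rfl (fun w hw => (Finset.mem_filter.mp hw).2), Finset.sum_const, hC2]
    simp [mul_comm]
  have hsumT3 : ∑ w ∈ T3, G.degree w = 6 := by
    rw [Finset.sum_congr rfl (fun w hw => (Finset.mem_filter.mp hw).2.2), Finset.sum_const, hT3]
    simp
  have hsumT2 : ∑ w ∈ T2, G.degree w = 2 * T2.card := by
    rw [Finset.sum_congr rfl (fun w hw => (Finset.mem_filter.mp hw).2.2), Finset.sum_const]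
    simp [mul_comm]
  -- cards
  have hcardsplit1 : C.card + R.card = n := by
    rw [← hV, ← Finset.card_univ]
    exact Finset.card_filter_add_card_filter_not _
  have hcardsplit2 : T3.card + T2.card = R.card := by
    rw [← hR3, ← hR2]
    exact Finset.card_filter_add_card_filter_not _
  have hy : T2.card = n - 4 := by omega
  have hΔ : Δ = n - 2 := by
    rw [← hsplit2, hR3, hR2] at hsplit1
    omega
  -- core pair
  obtain ⟨u, v, huv, hCeq⟩ := Finset.card_eq_two.mp hC2
  have hdegΔ : ∀ w, G.degree w = Δ ↔ (w = u ∨ w = v) := by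
    intro w
    constructor
    · intro h
      have : w ∈ C := by simp [hCdef, h]
      rw [hCeq] at this; simpa using this
    · rintro (rfl | rfl)
      · have : w ∈ C := by rw [hCeq]; simp
        exact (Finset.mem_filter.mp this).2
      · have : w ∈ C := by rw [hCeq]; simp
        exact (Finset.mem_filter.mp this).2
  have hdegu : G.degree u = Δ := (hdegΔ u).mpr (Or.inl rfl)
  have hdegv : G.degree v = Δ := (hdegΔ v).mpr (Or.inr rfl)
  have hAdjuv : G.Adj u v := hcoreadj u v (by rw [hdegiff]; exact hdegu) (by rw [hdegiff]; exact hdegv) huv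
  -- unique non-neighbor of u
  have hnonnbr : ∀ w : V, G.degree w = Δ →
      ∃ z, z ≠ w ∧ ¬ G.Adj w z ∧ ∀ x, G.Adj w x ↔ (x ≠ w ∧ x ≠ z) := by
    intro w hw
    have hcard1 : (Finset.univ \ insert w (G.neighborFinset w)).card = 1 := by
      rw [Finset.card_sdiff_of_subset (Finset.subset_univ _),
        Finset.card_insert_of_notMem (SimpleGraph.notMem_neighborFinset_self G w)]
      rw [Finset.card_univ, hV]
      have : (G.neighborFinset w).card = Δ := hw
      omega
    obtain ⟨z, hz⟩ := Finset.card_eq_one.mp hcard1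
    have hmem : ∀ x, x = z ↔ (x ≠ w ∧ ¬ G.Adj w x) := by
      intro x
      rw [← Finset.mem_singleton, ← hz]
      simp only [Finset.mem_sdiff, Finset.mem_univ, true_and, Finset.mem_insert,
        SimpleGraph.mem_neighborFinset, not_or]
    have hzw : z ≠ w := ((hmem z).mp rfl).1
    have hnadj : ¬ G.Adj w z := ((hmem z).mp rfl).2
    refine ⟨z, hzw, hnadj, fun x => ⟨fun h => ⟨(G.ne_of_adj h).symm, fun hh => by subst hh; exact hnadj h⟩,
      fun ⟨h1, h2⟩ => ?_⟩⟩
    by_contra hna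
    exact h2 ((hmem x).mpr ⟨h1, hna⟩)
  obtain ⟨a, hau, hnAdjua, hadju⟩ := hnonnbr u hdegu
  obtain ⟨b, hbv, hnAdjvb, hadjv⟩ := hnonnbr v hdegv
  have hav : a ≠ v := fun h => hnAdjua (h ▸ hAdjuv)
  have hbu : b ≠ u := fun h => hnAdjvb (h ▸ hAdjuv.symm)
  -- the tail part
  set P := Finset.univ \ ({u, v} : Finset V) with hPdef
  have hPmem : ∀ w, w ∈ P ↔ (w ≠ u ∧ w ≠ v) := by
    intro w; simp [hPdef]
  set t : V → ℕ := fun w => (G.neighborFinset w ∩ P).card with htdef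
  have htail23 : ∀ w ∈ P, G.degree w = 2 ∨ G.degree w = 3 := by
    intro w hw
    rw [hPmem] at hw
    have : G.degree w ≠ Δ := by
      intro h
      rcases (hdegΔ w).mp h with rfl | rfl
      · exact hw.1 rfl
      · exact hw.2 rfl
    have := htail w (by rwa [hdegiff])
    rwa [hdegiff] at this
  have hdegsplit : ∀ w ∈ P, G.degree w = t w +
      ((if G.Adj w u then 1 else 0) + (if G.Adj w v then 1 else 0)) := by
    intro w hw
    have h1 : (G.neighborFinset w ∩ P).card + (G.neighborFinset w \ P).card = G.degree w :=
      Finset.card_inter_add_card_sdiff _ _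
    have h2 : G.neighborFinset w \ P = ({u, v} : Finset V).filter (fun x => G.Adj w x) := by
      ext x
      simp only [Finset.mem_sdiff, hPdef, Finset.mem_filter, Finset.mem_univ, true_and,
        SimpleGraph.mem_neighborFinset, not_not, Finset.mem_insert, Finset.mem_singleton]
      tauto
    rw [← h1, h2, card_filter_pair huv]
  have hsumP : ∑ w ∈ P, t w = 4 := by
    have hsplitP : ∑ w ∈ P, G.degree w + ∑ w ∈ ({u, v} : Finset V), G.degree w = ∑ w, G.degree w := by
      rw [hPdef]
      exact Finset.sum_sdiff (Finset.subset_univ _)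
    have hsumuv : ∑ w ∈ ({u, v} : Finset V), G.degree w = 2 * n - 4 := by
      rw [Finset.sum_pair huv, hdegu, hdegv]; omega
    have hsumPdeg : ∑ w ∈ P, G.degree w = 2 * n - 2 := by omega
    -- count edges to u
    have hcntu : ∑ w ∈ P, (if G.Adj w u then 1 else 0) = n - 3 := by
      rw [← Finset.card_filter]
      have : P.filter (fun w => G.Adj w u) = G.neighborFinset u ∩ P := by
        ext x
        simp only [Finset.mem_filter, Finset.mem_inter, SimpleGraph.mem_neighborFinset]
        constructor
        · rintro ⟨h1, h2⟩; exact ⟨h2.symm, h1⟩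
        · rintro ⟨h1, h2⟩; exact ⟨h2, h1.symm⟩
      rw [this]
      have h1 : (G.neighborFinset u ∩ P).card + (G.neighborFinset u \ P).card = G.degree u :=
        Finset.card_inter_add_card_sdiff _ _
      have h2 : G.neighborFinset u \ P = {v} := by
        ext x
        rw [Finset.mem_sdiff, SimpleGraph.mem_neighborFinset, hPmem x, Finset.mem_singleton]
        constructor
        · rintro ⟨h3, h4⟩
          by_contra hxv
          exact h4 ⟨fun hh => G.irrefl (hh ▸ h3), hxv⟩
        · rintro rfl
          exact ⟨hAdjuv, fun hh => hh.2 rfl⟩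
      rw [h2, Finset.card_singleton] at h1
      omega
    have hcntv : ∑ w ∈ P, (if G.Adj w v then 1 else 0) = n - 3 := by
      rw [← Finset.card_filter]
      have : P.filter (fun w => G.Adj w v) = G.neighborFinset v ∩ P := by
        ext x
        simp only [Finset.mem_filter, Finset.mem_inter, SimpleGraph.mem_neighborFinset]
        constructor
        · rintro ⟨h1, h2⟩; exact ⟨h2.symm, h1⟩
        · rintro ⟨h1, h2⟩; exact ⟨h2, h1.symm⟩
      rw [this]
      have h1 : (G.neighborFinset v ∩ P).card + (G.neighborFinset v \ P).card = G.degree v :=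
        Finset.card_inter_add_card_sdiff _ _
      have h2 : G.neighborFinset v \ P = {u} := by
        ext x
        rw [Finset.mem_sdiff, SimpleGraph.mem_neighborFinset, hPmem x, Finset.mem_singleton]
        constructor
        · rintro ⟨h3, h4⟩
          by_contra hxu
          exact h4 ⟨hxu, fun hh => G.irrefl (hh ▸ h3)⟩
        · rintro rfl
          exact ⟨hAdjuv.symm, fun hh => hh.1 rfl⟩
      rw [h2, Finset.card_singleton] at h1
      omega
    have : ∑ w ∈ P, G.degree w = ∑ w ∈ P, t w +
        (∑ w ∈ P, (if G.Adj w u then 1 else 0) + ∑ w ∈ P, (if G.Adj w v then 1 else 0)) := by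
      rw [← Finset.sum_add_distrib, ← Finset.sum_add_distrib]
      exact Finset.sum_congr rfl hdegsplit
    omega
  -- helper facts
  have hmemI : ∀ w x : V, x ∈ G.neighborFinset w ∩ P ↔ (G.Adj w x ∧ x ≠ u ∧ x ≠ v) := by
    intro w x
    rw [Finset.mem_inter, SimpleGraph.mem_neighborFinset, hPmem x]
  have htcard : ∀ w : V, t w = (G.neighborFinset w ∩ P).card := fun w => rfl
  have htge1 : ∀ w x : V, x ∈ G.neighborFinset w ∩ P → 1 ≤ t w := by
    intro w x hx
    rw [htcard]
    exact Finset.card_pos.mpr ⟨x, hx⟩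
  have htge2 : ∀ w x y : V, x ≠ y → x ∈ G.neighborFinset w ∩ P → y ∈ G.neighborFinset w ∩ P →
      2 ≤ t w := by
    intro w x y hxy hx hy
    rw [htcard]
    calc 2 = ({x, y} : Finset V).card := (Finset.card_pair hxy).symm
      _ ≤ _ := Finset.card_le_card (by
          intro z hz
          rcases Finset.mem_insert.mp hz with rfl | hz
          · exact hx
          · rw [Finset.mem_singleton] at hz; subst hz; exact hy)
  have hsum3 : ∀ x y z : V, x ≠ y → x ≠ z → y ≠ z → x ∈ P → y ∈ P → z ∈ P →
      t x + t y + t z ≤ 4 := by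
    intro x y z hxy hxz hyz hx hy hz
    have hsub : ({x, y, z} : Finset V) ⊆ P := by
      intro w hw
      simp only [Finset.mem_insert, Finset.mem_singleton] at hw
      rcases hw with rfl | rfl | rfl <;> assumption
    have heq : ∑ w ∈ ({x, y, z} : Finset V), t w = t x + t y + t z := by
      rw [Finset.sum_insert (by simp [hxy, hxz]), Finset.sum_pair hyz]
      ring
    have h := Finset.sum_le_sum_of_subset (f := t) hsub
    rw [heq, hsumP] at h
    exact h
  have hsum4 : ∀ x y z w : V, x ≠ y → x ≠ z → x ≠ w → y ≠ z → y ≠ w → z ≠ w →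
      x ∈ P → y ∈ P → z ∈ P → w ∈ P → t x + t y + t z + t w ≤ 4 := by
    intro x y z w hxy hxz hxw hyz hyw hzw hx hy hz hw
    have hsub : ({x, y, z, w} : Finset V) ⊆ P := by
      intro q hq
      simp only [Finset.mem_insert, Finset.mem_singleton] at hq
      rcases hq with rfl | rfl | rfl | rfl <;> assumption
    have heq : ∑ q ∈ ({x, y, z, w} : Finset V), t q = t x + t y + t z + t w := by
      rw [Finset.sum_insert (by simp [hxy, hxz, hxw]), Finset.sum_insert (by simp [hyz, hyw]),
        Finset.sum_pair hzw]
      ring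
    have h := Finset.sum_le_sum_of_subset (f := t) hsub
    rw [heq, hsumP] at h
    exact h
  have hPa : a ∈ P := (hPmem a).mpr ⟨hau, hav⟩
  have hPb : b ∈ P := (hPmem b).mpr ⟨hbu, hbv⟩
  -- rule out a = b
  have hab : a ≠ b := by
    intro hab
    have hnAdjva : ¬ G.Adj v a := hab ▸ hnAdjvb
    have hdega := htail23 a hPa
    have hta : G.degree a = t a := by
      have h := hdegsplit a hPa
      rw [if_neg (fun h => hnAdjua h.symm), if_neg (fun h => hnAdjva h.symm)] at h
      omega
    have hta2 : 1 < (G.neighborFinset a ∩ P).card := by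
      rw [← htcard]; omega
    obtain ⟨c1, hc1, c2, hc2, hc12⟩ := Finset.one_lt_card.mp hta2
    obtain ⟨hadj_ac1, hc1u, hc1v⟩ := (hmemI a c1).mp hc1
    obtain ⟨hadj_ac2, hc2u, hc2v⟩ := (hmemI a c2).mp hc2
    have hc1P : c1 ∈ P := (hPmem c1).mpr ⟨hc1u, hc1v⟩
    have hc2P : c2 ∈ P := (hPmem c2).mpr ⟨hc2u, hc2v⟩
    have hc1a : c1 ≠ a := fun h => G.irrefl (h ▸ hadj_ac1)
    have hc2a : c2 ≠ a := fun h => G.irrefl (h ▸ hadj_ac2)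
    have htc1 : 1 ≤ t c1 := htge1 c1 a ((hmemI c1 a).mpr ⟨hadj_ac1.symm, hau, hav⟩)
    have htc2 : 1 ≤ t c2 := htge1 c2 a ((hmemI c2 a).mpr ⟨hadj_ac2.symm, hau, hav⟩)
    obtain ⟨z, hza, hzc1⟩ := twoTree_triangle G hTT hadj_ac1
    have hzu : z ≠ u := fun h => hnAdjua (h ▸ hza).symm
    have hzv : z ≠ v := fun h => hnAdjva (h ▸ hza).symm
    have hzP : z ∈ P := (hPmem z).mpr ⟨hzu, hzv⟩
    have hza' : z ≠ a := fun h => G.irrefl (h ▸ hza)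
    have hzc1' : z ≠ c1 := fun h => G.irrefl (h ▸ hzc1)
    by_cases hzc2 : z = c2
    · subst hzc2
      have h1 : 2 ≤ t c1 := htge2 c1 a z hza'.symm
        ((hmemI c1 a).mpr ⟨hadj_ac1.symm, hau, hav⟩)
        ((hmemI c1 z).mpr ⟨hzc1, hzu, hzv⟩)
      have h2 : 2 ≤ t z := htge2 z a c1 hc1a.symm
        ((hmemI z a).mpr ⟨hza.symm, hau, hav⟩)
        ((hmemI z c1).mpr ⟨hzc1.symm, hc1u, hc1v⟩)
      have h0 : 2 ≤ t a := by rw [htcard]; omega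
      have h3 := hsum3 a c1 z hc1a.symm hza'.symm hzc1'.symm hPa hc1P hzP
      omega
    · have hc2z : c2 ≠ z := fun h => hzc2 h.symm
      have hta3 : 3 ≤ t a := by
        rw [htcard]
        calc 3 = ({c1, c2, z} : Finset V).card := by
              rw [Finset.card_insert_of_notMem (by simp [hc12, hzc1'.symm]),
                Finset.card_pair hc2z]
          _ ≤ _ := Finset.card_le_card (by
              intro w hw
              simp only [Finset.mem_insert, Finset.mem_singleton] at hw
              rcases hw with rfl | rfl | rfl
              · exact hc1
              · exact hc2
              · exact (hmemI a w).mpr ⟨hza, hzu, hzv⟩)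
      have h3 := hsum3 a c1 c2 hc1a.symm hc2a.symm hc12 hPa hc1P hc2P
      omega
  -- a ≠ b from here on
  have hAdjva : G.Adj v a := (hadjv a).mpr ⟨hav, hab⟩
  have hAdjub : G.Adj u b := (hadju b).mpr ⟨hbu, fun h => hab h.symm⟩
  have hdega23 := htail23 a hPa
  have hdegb23 := htail23 b hPb
  have hta_eq : G.degree a = t a + 1 := by
    have h := hdegsplit a hPa
    rw [if_neg (fun hh => hnAdjua hh.symm), if_pos hAdjva.symm] at h
    omega
  have htb_eq : G.degree b = t b + 1 := by
    have h := hdegsplit b hPb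
    rw [if_pos hAdjub.symm, if_neg (fun hh => hnAdjvb hh.symm)] at h
    omega
  -- a and b are not adjacent
  have hnadjab : ¬ G.Adj a b := by
    intro hadjab
    obtain ⟨z, hza, hzb⟩ := twoTree_triangle G hTT hadjab
    have hzu : z ≠ u := fun h => hnAdjua (h ▸ hza).symm
    have hzv : z ≠ v := fun h => hnAdjvb (h ▸ hzb).symm
    have hzP : z ∈ P := (hPmem z).mpr ⟨hzu, hzv⟩
    have hza' : z ≠ a := fun h => G.irrefl (h ▸ hza)
    have hzb' : z ≠ b := fun h => G.irrefl (h ▸ hzb)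
    have h1 : 2 ≤ t a := htge2 a b z (fun h => hzb' h.symm)
      ((hmemI a b).mpr ⟨hadjab, hbu, hbv⟩)
      ((hmemI a z).mpr ⟨hza, hzu, hzv⟩)
    have h2 : 2 ≤ t b := htge2 b a z (fun h => hza' h.symm)
      ((hmemI b a).mpr ⟨hadjab.symm, hau, hav⟩)
      ((hmemI b z).mpr ⟨hzb, hzu, hzv⟩)
    have h3 : 2 ≤ t z := htge2 z a b hab
      ((hmemI z a).mpr ⟨hza.symm, hau, hav⟩)
      ((hmemI z b).mpr ⟨hzb.symm, hbu, hbv⟩)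
    have h4 := hsum3 a b z hab hza'.symm hzb'.symm hPa hPb hzP
    omega
  have htb1' : 1 ≤ t b := by omega
  -- t a = 1
  have hta1 : t a = 1 := by
    by_contra hcon
    have hta2 : 1 < (G.neighborFinset a ∩ P).card := by rw [← htcard]; omega
    obtain ⟨c1, hc1, c2, hc2, hc12⟩ := Finset.one_lt_card.mp hta2
    obtain ⟨hadj_ac1, hc1u, hc1v⟩ := (hmemI a c1).mp hc1
    obtain ⟨hadj_ac2, hc2u, hc2v⟩ := (hmemI a c2).mp hc2
    have hc1P : c1 ∈ P := (hPmem c1).mpr ⟨hc1u, hc1v⟩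
    have hc2P : c2 ∈ P := (hPmem c2).mpr ⟨hc2u, hc2v⟩
    have hc1a : c1 ≠ a := fun h => G.irrefl (h ▸ hadj_ac1)
    have hc2a : c2 ≠ a := fun h => G.irrefl (h ▸ hadj_ac2)
    have hc1b : c1 ≠ b := fun h => hnadjab (h ▸ hadj_ac1)
    have hc2b : c2 ≠ b := fun h => hnadjab (h ▸ hadj_ac2)
    have htc1 : 1 ≤ t c1 := htge1 c1 a ((hmemI c1 a).mpr ⟨hadj_ac1.symm, hau, hav⟩)
    have htc2 : 1 ≤ t c2 := htge1 c2 a ((hmemI c2 a).mpr ⟨hadj_ac2.symm, hau, hav⟩)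
    have h0 : 2 ≤ t a := by rw [htcard]; omega
    have h4 := hsum4 a b c1 c2 hab hc1a.symm hc2a.symm hc1b.symm hc2b.symm hc12
      hPa hPb hc1P hc2P
    omega
  have htb1 : t b = 1 := by
    by_contra hcon
    have htb2 : 1 < (G.neighborFinset b ∩ P).card := by rw [← htcard]; omega
    obtain ⟨c1, hc1, c2, hc2, hc12⟩ := Finset.one_lt_card.mp htb2
    obtain ⟨hadj_bc1, hc1u, hc1v⟩ := (hmemI b c1).mp hc1
    obtain ⟨hadj_bc2, hc2u, hc2v⟩ := (hmemI b c2).mp hc2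
    have hc1P : c1 ∈ P := (hPmem c1).mpr ⟨hc1u, hc1v⟩
    have hc2P : c2 ∈ P := (hPmem c2).mpr ⟨hc2u, hc2v⟩
    have hc1b : c1 ≠ b := fun h => G.irrefl (h ▸ hadj_bc1)
    have hc2b : c2 ≠ b := fun h => G.irrefl (h ▸ hadj_bc2)
    have hc1a : c1 ≠ a := fun h => hnadjab (h ▸ hadj_bc1).symm
    have hc2a : c2 ≠ a := fun h => hnadjab (h ▸ hadj_bc2).symm
    have htc1 : 1 ≤ t c1 := htge1 c1 b ((hmemI c1 b).mpr ⟨hadj_bc1.symm, hbu, hbv⟩)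
    have htc2 : 1 ≤ t c2 := htge1 c2 b ((hmemI c2 b).mpr ⟨hadj_bc2.symm, hbu, hbv⟩)
    have hta1' : 1 ≤ t a := by omega
    have h0 : 2 ≤ t b := by rw [htcard]; omega
    have h4 := hsum4 b a c1 c2 (fun h => hab h.symm) hc1b.symm hc2b.symm hc1a.symm hc2a.symm hc12
      hPb hPa hc1P hc2P
    omega
  -- extract c and d
  obtain ⟨c, hnc_a⟩ := Finset.card_eq_one.mp (show (G.neighborFinset a ∩ P).card = 1 by
    rw [← htcard]; exact hta1)
  obtain ⟨d, hnd_b⟩ := Finset.card_eq_one.mp (show (G.neighborFinset b ∩ P).card = 1 by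
    rw [← htcard]; exact htb1)
  have hcmem : c ∈ G.neighborFinset a ∩ P := by rw [hnc_a]; exact Finset.mem_singleton_self c
  have hdmem : d ∈ G.neighborFinset b ∩ P := by rw [hnd_b]; exact Finset.mem_singleton_self d
  obtain ⟨hAdjac, hcu, hcv⟩ := (hmemI a c).mp hcmem
  obtain ⟨hAdjbd, hdu, hdv⟩ := (hmemI b d).mp hdmem
  have hcP : c ∈ P := (hPmem c).mpr ⟨hcu, hcv⟩
  have hdP : d ∈ P := (hPmem d).mpr ⟨hdu, hdv⟩
  have hca : c ≠ a := fun h => G.irrefl (h ▸ hAdjac)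
  have hdb : d ≠ b := fun h => G.irrefl (h ▸ hAdjbd)
  have hcb : c ≠ b := fun h => hnadjab (h ▸ hAdjac)
  have hda : d ≠ a := fun h => hnadjab (h ▸ hAdjbd).symm
  have hAdjuc : G.Adj u c := (hadju c).mpr ⟨hcu, hca⟩
  have hAdjvc : G.Adj v c := (hadjv c).mpr ⟨hcv, hcb⟩
  have hAdjud : G.Adj u d := (hadju d).mpr ⟨hdu, hda⟩
  have hAdjvd : G.Adj v d := (hadjv d).mpr ⟨hdv, hdb⟩
  have hcd : c ≠ d := by
    intro h
    subst h
    have htc2 : 2 ≤ t c := htge2 c a b hab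
      ((hmemI c a).mpr ⟨hAdjac.symm, hau, hav⟩)
      ((hmemI c b).mpr ⟨hAdjbd.symm, hbu, hbv⟩)
    have hdegc := htail23 c hcP
    have h := hdegsplit c hcP
    rw [if_pos hAdjuc.symm, if_pos hAdjvc.symm] at h
    omega
  -- remaining tail vertices have no tail neighbors
  have htcge1 : 1 ≤ t c := htge1 c a ((hmemI c a).mpr ⟨hAdjac.symm, hau, hav⟩)
  have htdge1 : 1 ≤ t d := htge1 d b ((hmemI d b).mpr ⟨hAdjbd.symm, hbu, hbv⟩)
  have habcdP : ({a, b, c, d} : Finset V) ⊆ P := by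
    intro q hq
    simp only [Finset.mem_insert, Finset.mem_singleton] at hq
    rcases hq with rfl | rfl | rfl | rfl <;> assumption
  have hsumabcd : ∑ w ∈ ({a, b, c, d} : Finset V), t w = t a + t b + t c + t d := by
    rw [Finset.sum_insert (by simp [hab, hca.symm, hda.symm]),
      Finset.sum_insert (by simp [hcb.symm, hdb.symm]),
      Finset.sum_pair hcd]
    ring
  have hdiffsum : ∑ w ∈ P \ ({a, b, c, d} : Finset V), t w +
      ∑ w ∈ ({a, b, c, d} : Finset V), t w = ∑ w ∈ P, t w := Finset.sum_sdiff habcdP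
  have hkey : t c = 1 ∧ t d = 1 ∧ ∑ w ∈ P \ ({a, b, c, d} : Finset V), t w = 0 := by
    rw [hsumabcd, hsumP] at hdiffsum
    omega
  have hrest : ∀ w ∈ P, w ≠ a → w ≠ b → w ≠ c → w ≠ d → t w = 0 := by
    intro w hw h1 h2 h3 h4
    have hwmem : w ∈ P \ ({a, b, c, d} : Finset V) :=
      Finset.mem_sdiff.mpr ⟨hw, by simp [h1, h2, h3, h4]⟩
    exact Finset.sum_eq_zero_iff.mp hkey.2.2 w hwmem
  -- neighbor sets of c and d within P
  have hnc : G.neighborFinset c ∩ P = {a} := by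
    obtain ⟨x, hx⟩ := Finset.card_eq_one.mp (show (G.neighborFinset c ∩ P).card = 1 by
      rw [← htcard]; exact hkey.1)
    have hamem : a ∈ G.neighborFinset c ∩ P := (hmemI c a).mpr ⟨hAdjac.symm, hau, hav⟩
    rw [hx] at hamem ⊢
    rw [Finset.mem_singleton] at hamem
    rw [hamem]
  have hnd : G.neighborFinset d ∩ P = {b} := by
    obtain ⟨x, hx⟩ := Finset.card_eq_one.mp (show (G.neighborFinset d ∩ P).card = 1 by
      rw [← htcard]; exact hkey.2.1)
    have hbmem : b ∈ G.neighborFinset d ∩ P := (hmemI d b).mpr ⟨hAdjbd.symm, hbu, hbv⟩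
    rw [hx] at hbmem ⊢
    rw [Finset.mem_singleton] at hbmem
    rw [hbmem]
  -- conclusion
  refine ⟨u, v, a, b, c, d,
    ⟨huv, hau.symm, hbu.symm, hcu.symm, hdu.symm, hav.symm, hbv.symm, hcv.symm, hdv.symm,
      hab, hca.symm, hda.symm, hcb.symm, hdb.symm, hcd⟩, ?_⟩
  intro x y
  constructor
  · intro hxy
    by_cases hxu : x = u
    · subst hxu
      exact Or.inl ⟨rfl, (hadju y).mp hxy⟩
    by_cases hxv : x = v
    · subst hxv
      exact Or.inr (Or.inr (Or.inl ⟨rfl, (hadjv y).mp hxy⟩))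
    by_cases hyu : y = u
    · subst hyu
      exact Or.inr (Or.inl ⟨rfl, (hadju x).mp hxy.symm⟩)
    by_cases hyv : y = v
    · subst hyv
      exact Or.inr (Or.inr (Or.inr (Or.inl ⟨rfl, (hadjv x).mp hxy.symm⟩)))
    have hxP : x ∈ P := (hPmem x).mpr ⟨hxu, hxv⟩
    have hymem : y ∈ G.neighborFinset x ∩ P := (hmemI x y).mpr ⟨hxy, hyu, hyv⟩
    by_cases hxa : x = a
    · subst hxa
      rw [hnc_a, Finset.mem_singleton] at hymem
      exact Or.inr (Or.inr (Or.inr (Or.inr (Or.inl ⟨rfl, hymem⟩))))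
    by_cases hxb : x = b
    · subst hxb
      rw [hnd_b, Finset.mem_singleton] at hymem
      exact Or.inr (Or.inr (Or.inr (Or.inr (Or.inr (Or.inr (Or.inl ⟨rfl, hymem⟩))))))
    by_cases hxc : x = c
    · subst hxc
      rw [hnc, Finset.mem_singleton] at hymem
      exact Or.inr (Or.inr (Or.inr (Or.inr (Or.inr (Or.inl ⟨rfl, hymem⟩)))))
    by_cases hxd : x = d
    · subst hxd
      rw [hnd, Finset.mem_singleton] at hymem
      exact Or.inr (Or.inr (Or.inr (Or.inr (Or.inr (Or.inr (Or.inr ⟨rfl, hymem⟩))))))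
    exfalso
    have h0 : t x = 0 := hrest x hxP hxa hxb hxc hxd
    have hempty : G.neighborFinset x ∩ P = ∅ := Finset.card_eq_zero.mp (by rw [← htcard]; exact h0)
    rw [hempty] at hymem
    exact absurd hymem (Finset.notMem_empty y)
  · rintro (⟨rfl, h1, h2⟩ | ⟨rfl, h1, h2⟩ | ⟨rfl, h1, h2⟩ | ⟨rfl, h1, h2⟩ |
      ⟨rfl, rfl⟩ | ⟨rfl, rfl⟩ | ⟨rfl, rfl⟩ | ⟨rfl, rfl⟩)
    · exact (hadju y).mpr ⟨h1, h2⟩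
    · exact ((hadju x).mpr ⟨h1, h2⟩).symm
    · exact (hadjv y).mpr ⟨h1, h2⟩
    · exact ((hadjv x).mpr ⟨h1, h2⟩).symm
    · exact hAdjac
    · exact hAdjac.symm
    · exact hAdjbd
    · exact hAdjbd.symm

lemma iso_of_pred {V W : Type} [Fintype V] [Fintype W] (G : SimpleGraph V) (H : SimpleGraph W)
    (hcard : Fintype.card V = Fintype.card W)
    (u v a b c d : V) (u' v' a' b' c' d' : W)
    (hGd : u ≠ v ∧ u ≠ a ∧ u ≠ b ∧ u ≠ c ∧ u ≠ d ∧ v ≠ a ∧ v ≠ b ∧ v ≠ c ∧ v ≠ d ∧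
        a ≠ b ∧ a ≠ c ∧ a ≠ d ∧ b ≠ c ∧ b ≠ d ∧ c ≠ d)
    (hGc : ∀ x y, G.Adj x y ↔ Pred u v a b c d x y)
    (hHd : u' ≠ v' ∧ u' ≠ a' ∧ u' ≠ b' ∧ u' ≠ c' ∧ u' ≠ d' ∧ v' ≠ a' ∧ v' ≠ b' ∧ v' ≠ c' ∧
        v' ≠ d' ∧ a' ≠ b' ∧ a' ≠ c' ∧ a' ≠ d' ∧ b' ≠ c' ∧ b' ≠ d' ∧ c' ≠ d')
    (hHc : ∀ x y, H.Adj x y ↔ Pred u' v' a' b' c' d' x y) :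
    Nonempty (G ≃g H) := by
  classical
  obtain ⟨g1, g2, g3, g4, g5, g6, g7, g8, g9, g10, g11, g12, g13, g14, g15⟩ := hGd
  obtain ⟨k1, k2, k3, k4, k5, k6, k7, k8, k9, k10, k11, k12, k13, k14, k15⟩ := hHd
  set SG : Finset V := {u, v, a, b, c, d} with hSGdef
  set SH : Finset W := {u', v', a', b', c', d'} with hSHdef
  have hSGcard : SG.card = 6 := by
    rw [hSGdef]
    rw [Finset.card_insert_of_notMem (by simp [g1, g2, g3, g4, g5]),
      Finset.card_insert_of_notMem (by simp [g6, g7, g8, g9]),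
      Finset.card_insert_of_notMem (by simp [g10, g11, g12]),
      Finset.card_insert_of_notMem (by simp [g13, g14]),
      Finset.card_pair g15]
  have hSHcard : SH.card = 6 := by
    rw [hSHdef]
    rw [Finset.card_insert_of_notMem (by simp [k1, k2, k3, k4, k5]),
      Finset.card_insert_of_notMem (by simp [k6, k7, k8, k9]),
      Finset.card_insert_of_notMem (by simp [k10, k11, k12]),
      Finset.card_insert_of_notMem (by simp [k13, k14]),
      Finset.card_pair k15]
  have hcompl : Fintype.card ↥(Finset.univ \ SG) = Fintype.card ↥(Finset.univ \ SH) := by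
    rw [Fintype.card_coe, Fintype.card_coe, Finset.card_sdiff_of_subset (Finset.subset_univ _),
      Finset.card_sdiff_of_subset (Finset.subset_univ _), Finset.card_univ, Finset.card_univ,
      hSGcard, hSHcard, hcard]
  have ψ : ↥(Finset.univ \ SG) ≃ ↥(Finset.univ \ SH) := Fintype.equivOfCardEq hcompl
  set f : V → W := fun x =>
    if x = u then u' else if x = v then v' else if x = a then a' else if x = b then b' else
    if x = c then c' else if x = d then d' else
    (if hx : x ∈ Finset.univ \ SG then (ψ ⟨x, hx⟩ : W) else u') with hfdef
  set g : W → V := fun y =>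
    if y = u' then u else if y = v' then v else if y = a' then a else if y = b' then b else
    if y = c' then c else if y = d' then d else
    (if hy : y ∈ Finset.univ \ SH then (ψ.symm ⟨y, hy⟩ : V) else u) with hgdef
  have hfu : f u = u' := by simp [hfdef]
  have hfv : f v = v' := by simp [hfdef, g1.symm]
  have hfa : f a = a' := by simp [hfdef, g2.symm, g6.symm]
  have hfb : f b = b' := by simp [hfdef, g3.symm, g7.symm, g10.symm]
  have hfc : f c = c' := by simp [hfdef, g4.symm, g8.symm, g11.symm, g13.symm]
  have hfd : f d = d' := by simp [hfdef, g5.symm, g9.symm, g12.symm, g14.symm, g15.symm]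
  have hgu : g u' = u := by simp [hgdef]
  have hgv : g v' = v := by simp [hgdef, k1.symm]
  have hga : g a' = a := by simp [hgdef, k2.symm, k6.symm]
  have hgb : g b' = b := by simp [hgdef, k3.symm, k7.symm, k10.symm]
  have hgc : g c' = c := by simp [hgdef, k4.symm, k8.symm, k11.symm, k13.symm]
  have hgd : g d' = d := by simp [hgdef, k5.symm, k9.symm, k12.symm, k14.symm, k15.symm]
  have hfout : ∀ x (hx : x ∈ Finset.univ \ SG), f x = (ψ ⟨x, hx⟩ : W) := by
    intro x hx
    have hx' : x ∉ SG := (Finset.mem_sdiff.mp hx).2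
    rw [hSGdef] at hx'
    simp only [Finset.mem_insert, Finset.mem_singleton, not_or] at hx'
    obtain ⟨h1, h2, h3, h4, h5, h6⟩ := hx'
    simp only [hfdef, if_neg h1, if_neg h2, if_neg h3, if_neg h4, if_neg h5, if_neg h6,
      dif_pos hx]
  have hgout : ∀ y (hy : y ∈ Finset.univ \ SH), g y = (ψ.symm ⟨y, hy⟩ : V) := by
    intro y hy
    have hy' : y ∉ SH := (Finset.mem_sdiff.mp hy).2
    rw [hSHdef] at hy'
    simp only [Finset.mem_insert, Finset.mem_singleton, not_or] at hy'
    obtain ⟨h1, h2, h3, h4, h5, h6⟩ := hy'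
    simp only [hgdef, if_neg h1, if_neg h2, if_neg h3, if_neg h4, if_neg h5, if_neg h6,
      dif_pos hy]
  have hleft : Function.LeftInverse g f := by
    intro x
    by_cases h1 : x = u; · subst h1; rw [hfu, hgu]
    by_cases h2 : x = v; · subst h2; rw [hfv, hgv]
    by_cases h3 : x = a; · subst h3; rw [hfa, hga]
    by_cases h4 : x = b; · subst h4; rw [hfb, hgb]
    by_cases h5 : x = c; · subst h5; rw [hfc, hgc]
    by_cases h6 : x = d; · subst h6; rw [hfd, hgd]
    have hx : x ∈ Finset.univ \ SG := by
      rw [Finset.mem_sdiff]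
      exact ⟨Finset.mem_univ x, by simp [hSGdef, h1, h2, h3, h4, h5, h6]⟩
    rw [hfout x hx]
    have hy : (ψ ⟨x, hx⟩ : W) ∈ Finset.univ \ SH := (ψ ⟨x, hx⟩).2
    rw [hgout _ hy]
    have : (⟨(ψ ⟨x, hx⟩ : W), hy⟩ : ↥(Finset.univ \ SH)) = ψ ⟨x, hx⟩ := Subtype.ext rfl
    rw [this, Equiv.symm_apply_apply]
  have hright : Function.RightInverse g f := by
    intro y
    by_cases h1 : y = u'; · subst h1; rw [hgu, hfu]
    by_cases h2 : y = v'; · subst h2; rw [hgv, hfv]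
    by_cases h3 : y = a'; · subst h3; rw [hga, hfa]
    by_cases h4 : y = b'; · subst h4; rw [hgb, hfb]
    by_cases h5 : y = c'; · subst h5; rw [hgc, hfc]
    by_cases h6 : y = d'; · subst h6; rw [hgd, hfd]
    have hy : y ∈ Finset.univ \ SH := by
      rw [Finset.mem_sdiff]
      exact ⟨Finset.mem_univ y, by simp [hSHdef, h1, h2, h3, h4, h5, h6]⟩
    rw [hgout y hy]
    have hx : (ψ.symm ⟨y, hy⟩ : V) ∈ Finset.univ \ SG := (ψ.symm ⟨y, hy⟩).2
    rw [hfout _ hx]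
    have : (⟨(ψ.symm ⟨y, hy⟩ : V), hx⟩ : ↥(Finset.univ \ SG)) = ψ.symm ⟨y, hy⟩ := Subtype.ext rfl
    rw [this, Equiv.apply_symm_apply]
  set φ : V ≃ W := ⟨f, g, hleft, hright⟩ with hφdef
  have hinj : Function.Injective f := hleft.injective
  have hiffu : ∀ z, f z = u' ↔ z = u := fun z =>
    ⟨fun h => hinj (h.trans hfu.symm), fun h => h ▸ hfu⟩
  have hiffv : ∀ z, f z = v' ↔ z = v := fun z =>
    ⟨fun h => hinj (h.trans hfv.symm), fun h => h ▸ hfv⟩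
  have hiffa : ∀ z, f z = a' ↔ z = a := fun z =>
    ⟨fun h => hinj (h.trans hfa.symm), fun h => h ▸ hfa⟩
  have hiffb : ∀ z, f z = b' ↔ z = b := fun z =>
    ⟨fun h => hinj (h.trans hfb.symm), fun h => h ▸ hfb⟩
  have hiffc : ∀ z, f z = c' ↔ z = c := fun z =>
    ⟨fun h => hinj (h.trans hfc.symm), fun h => h ▸ hfc⟩
  have hiffd : ∀ z, f z = d' ↔ z = d := fun z =>
    ⟨fun h => hinj (h.trans hfd.symm), fun h => h ▸ hfd⟩
  refine ⟨⟨φ, ?_⟩⟩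
  intro x y
  show H.Adj (f x) (f y) ↔ G.Adj x y
  rw [hHc, hGc]
  simp only [Pred, ne_eq, hiffu, hiffv, hiffa, hiffb, hiffc, hiffd]

end Helpers

theorem stmt10 (n : ℕ) (hn : 6 ≤ n)
    (V W : Type) [Fintype V] [Fintype W]
    (G : SimpleGraph V) (H : SimpleGraph W)
    (hV : Fintype.card V = n) (hW : Fintype.card W = n)
    (ΔG ΔH : ℕ)
    (hG : IsStrongCentral G 2 ΔG) (hH : IsStrongCentral H 2 ΔH)
    (hG3 : tail3 G ΔG = 2) (hH3 : tail3 H ΔH = 2) :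
    Nonempty (G ≃g H) := by
  classical
  obtain ⟨uG, vG, aG, bG, cG, dG, hGd, hGc⟩ := structure_lemma G n ΔG hn hV hG hG3
  obtain ⟨uH, vH, aH, bH, cH, dH, hHd, hHc⟩ := structure_lemma H n ΔH hn hW hH hH3
  exact iso_of_pred G H (hV.trans hW.symm) uG vG aG bG cG dG uH vH aH bH cH dH hGd hGc hHd hHc
end

section
/- For every integer n ≥ 4 and every integer Δ satisfying ⌈(n+2)/2⌉ ≤ Δ ≤ n − 1, there exists a strong 2-central (bicentral) 2-tree on n vertices with maximum degree Δ and tail set {2,3}. -/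
open SimpleGraph

/-- directed "parent" relation: `x` is a neighbor of `y` coming from `y`'s attachment. -/
def CC (a b x y : ℕ) : Prop :=
  (x = 0 ∧ y = 1) ∨
  (x = 0 ∧ 2 ≤ y ∧ y ≤ a+1+b) ∨
  (x = 1 ∧ 2 ≤ y ∧ y ≤ a+1) ∨
  (x = 1 ∧ a+2+b ≤ y) ∨
  (x = 2 ∧ y = a+2 ∧ 1 ≤ b) ∨
  (x = 3 ∧ y = a+2+b ∧ 1 ≤ b) ∨
  (x+1 = y ∧ a+3 ≤ y ∧ y ≤ a+1+b) ∨
  (x+1 = y ∧ a+3+b ≤ y)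

def myG (n a b : ℕ) : SimpleGraph (Fin n) where
  Adj i j := i.val ≠ j.val ∧ (CC a b i.val j.val ∨ CC a b j.val i.val)
  symm := ⟨fun i j h => ⟨Ne.symm h.1, Or.symm h.2⟩⟩
  loopless := ⟨fun i h => h.1 rfl⟩

lemma myG_adj (n a b : ℕ) (i j : Fin n) :
    (myG n a b).Adj i j ↔ i.val ≠ j.val ∧ (CC a b i.val j.val ∨ CC a b j.val i.val) :=
  Iff.rfl

lemma ncard_val_mem {n : ℕ} (S : Finset ℕ) (hS : ∀ s ∈ S, s < n) (T : Set (Fin n))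
    (hT : ∀ j : Fin n, j ∈ T ↔ j.val ∈ S) : T.ncard = S.card := by
  have h : T = ↑(S.attachFin hS) := by
    ext j; simp [Finset.mem_attachFin, hT]
  rw [h, Set.ncard_coe_finset, Finset.card_attachFin]

lemma deg_pair {n : ℕ} (G : SimpleGraph (Fin n)) (v x y : Fin n) (hxy : x ≠ y)
    (h : ∀ w, G.Adj v w ↔ w = x ∨ w = y) : gdeg G v = 2 := by
  have hs : G.neighborSet v = {x, y} := by
    ext w; simp [SimpleGraph.mem_neighborSet, h w]
  rw [gdeg, hs, Set.ncard_pair hxy]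

lemma deg_triple {n : ℕ} (G : SimpleGraph (Fin n)) (v x y z : Fin n)
    (hxy : x ≠ y) (hxz : x ≠ z) (hyz : y ≠ z)
    (h : ∀ w, G.Adj v w ↔ w = x ∨ w = y ∨ w = z) : gdeg G v = 3 := by
  have hs : G.neighborSet v = {x, y, z} := by
    ext w; simp [SimpleGraph.mem_neighborSet, h w]
  rw [gdeg, hs, Set.ncard_insert_of_notMem (by simp [hxy, hxz]),
    Set.ncard_pair hyz]

lemma deg0 (n a b : ℕ) (ha : 2 ≤ a) (hn : n = a+2*b+2) :
    gdeg (myG n a b) ⟨0, by omega⟩ = a+b+1 := by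
  have h := ncard_val_mem (n := n) (Finset.Icc 1 (a+1+b))
    (fun s hs => by simp only [Finset.mem_Icc] at hs; omega)
    ((myG n a b).neighborSet ⟨0, by omega⟩)
    (fun j => by
      have hj := j.isLt
      simp [SimpleGraph.mem_neighborSet, myG_adj, CC, Finset.mem_Icc]
      omega)
  rw [gdeg, h, Nat.card_Icc]; omega

lemma deg1 (n a b : ℕ) (ha : 2 ≤ a) (hn : n = a+2*b+2) :
    gdeg (myG n a b) ⟨1, by omega⟩ = a+b+1 := by
  have h := ncard_val_mem (n := n)
    (insert 0 (Finset.Icc 2 (a+1) ∪ Finset.Icc (a+2+b) (a+1+2*b)))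
    (fun s hs => by
      simp only [Finset.mem_insert, Finset.mem_union, Finset.mem_Icc] at hs; omega)
    ((myG n a b).neighborSet ⟨1, by omega⟩)
    (fun j => by
      have hj := j.isLt
      simp [SimpleGraph.mem_neighborSet, myG_adj, CC, Finset.mem_insert,
        Finset.mem_union, Finset.mem_Icc]
      omega)
  rw [gdeg, h, Finset.card_insert_of_notMem (by
      simp only [Finset.mem_union, Finset.mem_Icc]; omega),
    Finset.card_union_of_disjoint (by
      rw [Finset.disjoint_left]; intro x hx hx'
      simp only [Finset.mem_Icc] at hx hx'; omega),
    Nat.card_Icc, Nat.card_Icc]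
  omega

set_option maxHeartbeats 1000000 in
lemma tail_deg (n a b : ℕ) (ha : 2 ≤ a) (hn : n = a+2*b+2) (v : Fin n) (hv : 2 ≤ v.val) :
    gdeg (myG n a b) v = 2 ∨ (gdeg (myG n a b) v = 3 ∧ 1 ≤ b) := by
  have hlt := v.isLt
  rcases (by omega :
      (v.val ≤ a+1 ∧ b = 0) ∨
      (v.val = 2 ∧ 1 ≤ b) ∨ (v.val = 3 ∧ 1 ≤ b) ∨ (4 ≤ v.val ∧ v.val ≤ a+1 ∧ 1 ≤ b) ∨
      (v.val = a+2 ∧ v.val ≤ a+b) ∨ (a+3 ≤ v.val ∧ v.val ≤ a+b) ∨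
      (v.val = a+1+b ∧ v.val = a+2 ∧ 1 ≤ b) ∨ (v.val = a+1+b ∧ a+3 ≤ v.val) ∨
      (v.val = a+2+b ∧ v.val ≤ a+2*b) ∨ (a+3+b ≤ v.val ∧ v.val ≤ a+2*b) ∨
      (v.val = a+1+2*b ∧ v.val = a+2+b ∧ 1 ≤ b) ∨ (v.val = a+1+2*b ∧ a+3+b ≤ v.val)) with
    h|h|h|h|h|h|h|h|h|h|h|h
  · left
    apply deg_pair _ v ⟨0, by omega⟩ ⟨1, by omega⟩ (by simp [Fin.ext_iff])
    intro w; have hw := w.isLt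
    simp [myG_adj, CC, Fin.ext_iff]; omega
  · right; refine ⟨?_, h.2⟩
    apply deg_triple _ v ⟨0, by omega⟩ ⟨1, by omega⟩ ⟨a+2, by omega⟩
      (by simp [Fin.ext_iff]) (by simp [Fin.ext_iff] <;> omega) (by simp [Fin.ext_iff] <;> omega)
    intro w; have hw := w.isLt
    simp [myG_adj, CC, Fin.ext_iff]; omega
  · right; refine ⟨?_, h.2⟩
    apply deg_triple _ v ⟨0, by omega⟩ ⟨1, by omega⟩ ⟨a+2+b, by omega⟩
      (by simp [Fin.ext_iff]) (by simp [Fin.ext_iff] <;> omega) (by simp [Fin.ext_iff] <;> omega)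
    intro w; have hw := w.isLt
    simp [myG_adj, CC, Fin.ext_iff]; omega
  · left
    apply deg_pair _ v ⟨0, by omega⟩ ⟨1, by omega⟩ (by simp [Fin.ext_iff])
    intro w; have hw := w.isLt
    simp [myG_adj, CC, Fin.ext_iff]; omega
  · right; refine ⟨?_, by omega⟩
    apply deg_triple _ v ⟨0, by omega⟩ ⟨2, by omega⟩ ⟨v.val+1, by omega⟩
      (by simp [Fin.ext_iff]) (by simp [Fin.ext_iff] <;> omega) (by simp [Fin.ext_iff] <;> omega)
    intro w; have hw := w.isLt
    simp [myG_adj, CC, Fin.ext_iff]; omega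
  · right; refine ⟨?_, by omega⟩
    apply deg_triple _ v ⟨0, by omega⟩ ⟨v.val-1, by omega⟩ ⟨v.val+1, by omega⟩
      (by simp [Fin.ext_iff] <;> omega) (by simp [Fin.ext_iff] <;> omega) (by simp [Fin.ext_iff] <;> omega)
    intro w; have hw := w.isLt
    simp [myG_adj, CC, Fin.ext_iff]; omega
  · left
    apply deg_pair _ v ⟨0, by omega⟩ ⟨2, by omega⟩ (by simp [Fin.ext_iff])
    intro w; have hw := w.isLt
    simp [myG_adj, CC, Fin.ext_iff]; omega
  · left
    apply deg_pair _ v ⟨0, by omega⟩ ⟨v.val-1, by omega⟩ (by simp [Fin.ext_iff] <;> omega)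
    intro w; have hw := w.isLt
    simp [myG_adj, CC, Fin.ext_iff]; omega
  · right; refine ⟨?_, by omega⟩
    apply deg_triple _ v ⟨1, by omega⟩ ⟨3, by omega⟩ ⟨v.val+1, by omega⟩
      (by simp [Fin.ext_iff]) (by simp [Fin.ext_iff] <;> omega) (by simp [Fin.ext_iff] <;> omega)
    intro w; have hw := w.isLt
    simp [myG_adj, CC, Fin.ext_iff]; omega
  · right; refine ⟨?_, by omega⟩
    apply deg_triple _ v ⟨1, by omega⟩ ⟨v.val-1, by omega⟩ ⟨v.val+1, by omega⟩
      (by simp [Fin.ext_iff] <;> omega) (by simp [Fin.ext_iff] <;> omega) (by simp [Fin.ext_iff] <;> omega)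
    intro w; have hw := w.isLt
    simp [myG_adj, CC, Fin.ext_iff]; omega
  · left
    apply deg_pair _ v ⟨1, by omega⟩ ⟨3, by omega⟩ (by simp [Fin.ext_iff])
    intro w; have hw := w.isLt
    simp [myG_adj, CC, Fin.ext_iff]; omega
  · left
    apply deg_pair _ v ⟨1, by omega⟩ ⟨v.val-1, by omega⟩ (by simp [Fin.ext_iff] <;> omega)
    intro w; have hw := w.isLt
    simp [myG_adj, CC, Fin.ext_iff]; omega

lemma core_set (n a b : ℕ) (ha : 2 ≤ a) (hn : n = a+2*b+2) :
    {v : Fin n | gdeg (myG n a b) v = a+b+1} =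
      {(⟨0, by omega⟩ : Fin n), (⟨1, by omega⟩ : Fin n)} := by
  ext v
  simp only [Set.mem_setOf_eq, Set.mem_insert_iff, Set.mem_singleton_iff]
  constructor
  · intro hd
    by_contra hne
    push_neg at hne
    have h0 : v.val ≠ 0 := fun h => hne.1 (Fin.ext h)
    have h1 : v.val ≠ 1 := fun h => hne.2 (Fin.ext h)
    rcases tail_deg n a b ha hn v (by omega) with h | ⟨h, hb⟩ <;> omega
  · rintro (rfl | rfl)
    · exact deg0 n a b ha hn
    · exact deg1 n a b ha hn

set_option maxHeartbeats 1000000 in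
lemma myG_twoTree (n a b : ℕ) (ha : 2 ≤ a) (hn : n = a+2*b+2) :
    IsTwoTree (myG n a b) := by
  unfold IsTwoTree
  rw [Fintype.card_fin n]
  refine ⟨by omega, Equiv.refl _, ?_, ?_⟩
  · intro i j hi hj hij
    have hne : i.val ≠ j.val := fun h => hij (Fin.ext h)
    simp only [Equiv.refl_apply, myG_adj, CC]
    rcases (by omega : (i.val = 0 ∧ j.val = 1) ∨ (i.val = 0 ∧ j.val = 2) ∨
        (i.val = 1 ∧ j.val = 2) ∨ (i.val = 1 ∧ j.val = 0) ∨ (i.val = 2 ∧ j.val = 0) ∨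
        (i.val = 2 ∧ j.val = 1)) with h|h|h|h|h|h
    · exact ⟨hne, Or.inl (by omega)⟩
    · exact ⟨hne, Or.inl (by omega)⟩
    · exact ⟨hne, Or.inl (by omega)⟩
    · exact ⟨hne, Or.inr (by omega)⟩
    · exact ⟨hne, Or.inr (by omega)⟩
    · exact ⟨hne, Or.inr (by omega)⟩
  · intro k hk
    have hkn : k.val < n := k.isLt
    rcases (by omega :
        (3 ≤ k.val ∧ k.val ≤ a+1) ∨ k.val = a+2 ∨ (a+3 ≤ k.val ∧ k.val ≤ a+1+b) ∨
        k.val = a+2+b ∨ a+3+b ≤ k.val) with h|h|h|h|h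
    · refine ⟨⟨0, by omega⟩, ⟨1, by omega⟩, by simp; omega, by simp; omega,
        by simp [Fin.ext_iff], ?_, ?_⟩
      · simp [myG_adj, CC]
      · intro m hm; have hmn : m.val < n := m.isLt
        simp [myG_adj, CC, Fin.ext_iff]
        omega
    · refine ⟨⟨0, by omega⟩, ⟨2, by omega⟩, by simp; omega, by simp; omega,
        by simp [Fin.ext_iff], ?_, ?_⟩
      · simp [myG_adj, CC]; omega
      · intro m hm; have hmn : m.val < n := m.isLt
        simp [myG_adj, CC, Fin.ext_iff]
        omega
    · refine ⟨⟨0, by omega⟩, ⟨k.val-1, by omega⟩, by simp; omega, by simp; omega,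
        by simp [Fin.ext_iff] <;> omega, ?_, ?_⟩
      · simp [myG_adj, CC]; omega
      · intro m hm; have hmn : m.val < n := m.isLt
        simp [myG_adj, CC, Fin.ext_iff]
        omega
    · refine ⟨⟨1, by omega⟩, ⟨3, by omega⟩, by simp; omega, by simp; omega,
        by simp [Fin.ext_iff], ?_, ?_⟩
      · simp [myG_adj, CC]; omega
      · intro m hm; have hmn : m.val < n := m.isLt
        simp [myG_adj, CC, Fin.ext_iff]
        omega
    · refine ⟨⟨1, by omega⟩, ⟨k.val-1, by omega⟩, by simp; omega, by simp; omega,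
        by simp [Fin.ext_iff] <;> omega, ?_, ?_⟩
      · simp [myG_adj, CC]; omega
      · intro m hm; have hmn : m.val < n := m.isLt
        simp [myG_adj, CC, Fin.ext_iff]
        omega

lemma main_aux (n a b : ℕ) (ha : 2 ≤ a) (hn : n = a+2*b+2) :
    IsStrongCentral (myG n a b) 2 (a+b+1) := by
  refine ⟨myG_twoTree n a b ha hn, ?_, ?_, ?_, ?_⟩
  · intro v
    rcases (by omega : v.val = 0 ∨ v.val = 1 ∨ 2 ≤ v.val) with h | h | h
    · have : v = ⟨0, by omega⟩ := Fin.ext h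
      rw [this, deg0 n a b ha hn]
    · have : v = ⟨1, by omega⟩ := Fin.ext h
      rw [this, deg1 n a b ha hn]
    · rcases tail_deg n a b ha hn v h with h2 | ⟨h3, _⟩ <;> omega
  · rw [core_set n a b ha hn, Set.ncard_pair (by simp [Fin.ext_iff])]
  · intro u v hu hv huv
    have hu' : u ∈ {v : Fin n | gdeg (myG n a b) v = a+b+1} := hu
    have hv' : v ∈ {v : Fin n | gdeg (myG n a b) v = a+b+1} := hv
    rw [core_set n a b ha hn] at hu' hv'
    simp only [Set.mem_insert_iff, Set.mem_singleton_iff] at hu' hv'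
    have hne : u.val ≠ v.val := fun h => huv (Fin.ext h)
    rw [myG_adj]
    rcases hu' with rfl | rfl <;> rcases hv' with rfl | rfl <;>
      simp [CC, Fin.ext_iff] at hne ⊢ <;> omega
  · intro v hv
    have h2 : 2 ≤ v.val := by
      by_contra hc
      rcases (by omega : v.val = 0 ∨ v.val = 1) with h | h
      · exact hv (by rw [show v = ⟨0, by omega⟩ from Fin.ext h]; exact deg0 n a b ha hn)
      · exact hv (by rw [show v = ⟨1, by omega⟩ from Fin.ext h]; exact deg1 n a b ha hn)
    rcases tail_deg n a b ha hn v h2 with h | ⟨h, _⟩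
    · exact Or.inl h
    · exact Or.inr h

theorem stmt11 (n Δ : ℕ) (hn : 4 ≤ n)
    (h1 : ⌈((n : ℚ) + 2) / 2⌉ ≤ (Δ : ℤ)) (h2 : Δ ≤ n - 1) :
    ∃ G : SimpleGraph (Fin n), IsStrongCentral G 2 Δ := by
  have hge : n + 2 ≤ 2*Δ := by
    have h1' : ((n:ℚ)+2)/2 ≤ (Δ:ℚ) := le_trans (Int.le_ceil _) (by exact_mod_cast h1)
    have h1'' : (n:ℚ) + 2 ≤ 2*(Δ:ℚ) := by linarith
    exact_mod_cast h1''
  set a := 2*Δ - n with hadef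
  set b := n - 1 - Δ with hbdef
  have ha : 2 ≤ a := by omega
  have hn' : n = a + 2*b + 2 := by omega
  have hΔ : Δ = a + b + 1 := by omega
  exact ⟨myG n a b, hΔ ▸ main_aux n a b ha hn'⟩
end

section
/- For every n ≥ 7 and every integer K with 2 ≤ K ≤ ⌊(n−5)/2⌋, there exists a strong 2-central (bicentral) 2-tree G on n vertices with tail set {2,3}, maximum degree Δ = n − 1 − K, and σ(G) = 3. -/
open SimpleGraph

/-- `sigmaInv G Δ` : the number of degree-3 tail vertices adjacent to every core vertex
(for a bicentral 2-tree, the degree-3 vertices in `S(G) = N(a) ∩ N(b) ∩ T`). -/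
noncomputable def sigmaInv {V : Type} [Fintype V] (G : SimpleGraph V) (Δ : ℕ) : ℕ :=
  ({s | gdeg G s ≠ Δ ∧ gdeg G s = 3 ∧ ∀ c, gdeg G c = Δ → G.Adj c s}).ncard

def RelK (K a b : ℕ) : Prop :=
  (a = 0 ∧ (1 ≤ b ∧ b ≤ K+4 ∨ 2*K+5 ≤ b)) ∨
  (a = 1 ∧ (b = 2 ∨ b = 4 ∨ K+4 ≤ b)) ∨
  (a = 2 ∧ b = 3) ∨
  (a+1 = b ∧ (5 ≤ b ∧ b ≤ K+3 ∨ K+5 ≤ b ∧ b ≤ 2*K+4))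

instance (K a b : ℕ) : Decidable (RelK K a b) := by unfold RelK; infer_instance

lemma relK_lt {K a b : ℕ} (h : RelK K a b) : a < b := by unfold RelK at h; omega

def Gr (n K : ℕ) : SimpleGraph (Fin n) where
  Adj x y := RelK K x.val y.val ∨ RelK K y.val x.val
  symm := ⟨fun x y h => Or.symm h⟩
  loopless := ⟨fun x h => by
    rcases h with h | h <;> exact absurd (relK_lt h) (lt_irrefl _)⟩

lemma gr_adj {n K : ℕ} (x y : Fin n) :
    (Gr n K).Adj x y ↔ (RelK K x.val y.val ∨ RelK K y.val x.val) := Iff.rfl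

lemma ncard_val_eq (n : ℕ) (S : ℕ → Prop) [DecidablePred S] :
    {v : Fin n | S v.val}.ncard = ((Finset.range n).filter S).card := by
  have h1 : {v : Fin n | S v.val} = ↑(Finset.univ.filter (fun v : Fin n => S v.val)) := by
    ext v; simp
  rw [h1, Set.ncard_coe_finset]
  refine Finset.card_bij (fun a _ => a.val) (fun a ha => ?_) (fun a _ b _ hab => ?_)
    (fun b hb => ?_)
  · simp only [Finset.mem_filter, Finset.mem_univ, true_and] at ha
    simp only [Finset.mem_filter, Finset.mem_range]
    exact ⟨a.isLt, ha⟩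
  · exact Fin.val_injective hab
  · simp only [Finset.mem_filter, Finset.mem_range] at hb
    exact ⟨⟨b, hb.1⟩, by simp [hb.2], rfl⟩

lemma gdeg_eq (n K : ℕ) (v : Fin n) :
    gdeg (Gr n K) v
      = ((Finset.range n).filter (fun w => RelK K v.val w ∨ RelK K w v.val)).card := by
  have h1 : (Gr n K).neighborSet v
      = {w : Fin n | (fun m => RelK K v.val m ∨ RelK K m v.val) w.val} := rfl
  rw [gdeg, h1]
  exact ncard_val_eq n (fun m => RelK K v.val m ∨ RelK K m v.val)

lemma gdeg_cases (n K : ℕ) (hK : 2 ≤ K) (h2K : 2*K+5 ≤ n) (v : Fin n) :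
    (v.val ≤ 1 ∧ gdeg (Gr n K) v = n-1-K) ∨
    ((v.val = 2 ∨ v.val = 4 ∨ v.val = K+4 ∨ (5 ≤ v.val ∧ v.val ≤ K+2) ∨
        (K+5 ≤ v.val ∧ v.val ≤ 2*K+3)) ∧ gdeg (Gr n K) v = 3) ∨
    ((v.val = 3 ∨ v.val = K+3 ∨ v.val = 2*K+4 ∨ 2*K+5 ≤ v.val) ∧ gdeg (Gr n K) v = 2) := by
  rcases (by omega : v.val = 0 ∨ v.val = 1 ∨ v.val = 2 ∨ v.val = 3 ∨ v.val = 4 ∨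
      (5 ≤ v.val ∧ v.val ≤ K+2) ∨ v.val = K+3 ∨ v.val = K+4 ∨
      (K+5 ≤ v.val ∧ v.val ≤ 2*K+3) ∨ v.val = 2*K+4 ∨ 2*K+5 ≤ v.val) with
    h|h|h|h|h|h|h|h|h|h|h
  · -- v = 0
    left
    refine ⟨by omega, ?_⟩
    rw [gdeg_eq, h]
    have he : (Finset.range n).filter (fun w => RelK K 0 w ∨ RelK K w 0)
        = Finset.Ico 1 (K+5) ∪ Finset.Ico (2*K+5) n := by
      ext w
      simp only [Finset.mem_filter, Finset.mem_range, Finset.mem_union, Finset.mem_Ico]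
      unfold RelK; omega
    rw [he, Finset.card_union_of_disjoint
        (by simp only [Finset.disjoint_left, Finset.mem_Ico]; omega),
      Nat.card_Ico, Nat.card_Ico]
    omega
  · -- v = 1
    left
    refine ⟨by omega, ?_⟩
    rw [gdeg_eq, h]
    have he : (Finset.range n).filter (fun w => RelK K 1 w ∨ RelK K w 1)
        = {0, 2, 4} ∪ Finset.Ico (K+4) n := by
      ext w
      simp only [Finset.mem_filter, Finset.mem_range, Finset.mem_union, Finset.mem_Ico,
        Finset.mem_insert, Finset.mem_singleton]
      unfold RelK; omega
    rw [he, Finset.card_union_of_disjoint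
        (by simp only [Finset.disjoint_left, Finset.mem_Ico, Finset.mem_insert,
              Finset.mem_singleton]; omega),
      Nat.card_Ico]
    have : ({0, 2, 4} : Finset ℕ).card = 3 := by decide
    omega
  · -- v = 2
    right; left
    refine ⟨by omega, ?_⟩
    rw [gdeg_eq, h]
    have he : (Finset.range n).filter (fun w => RelK K 2 w ∨ RelK K w 2)
        = {0, 1, 3} := by
      ext w
      simp only [Finset.mem_filter, Finset.mem_range, Finset.mem_insert, Finset.mem_singleton]
      unfold RelK; omega
    rw [he]; decide
  · -- v = 3
    right; right
    refine ⟨by omega, ?_⟩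
    rw [gdeg_eq, h]
    have he : (Finset.range n).filter (fun w => RelK K 3 w ∨ RelK K w 3)
        = {0, 2} := by
      ext w
      simp only [Finset.mem_filter, Finset.mem_range, Finset.mem_insert, Finset.mem_singleton]
      unfold RelK; omega
    rw [he]; decide
  · -- v = 4
    right; left
    refine ⟨by omega, ?_⟩
    rw [gdeg_eq, h]
    have he : (Finset.range n).filter (fun w => RelK K 4 w ∨ RelK K w 4)
        = {0, 1, 5} := by
      ext w
      simp only [Finset.mem_filter, Finset.mem_range, Finset.mem_insert, Finset.mem_singleton]
      unfold RelK; omega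
    rw [he]; decide
  · -- 5 ≤ v ≤ K+2  (d-chain interior)
    right; left
    refine ⟨by omega, ?_⟩
    rw [gdeg_eq]
    have he : (Finset.range n).filter (fun w => RelK K v.val w ∨ RelK K w v.val)
        = {0, v.val - 1, v.val + 1} := by
      ext w
      simp only [Finset.mem_filter, Finset.mem_range, Finset.mem_insert, Finset.mem_singleton]
      unfold RelK; omega
    rw [he, Finset.card_insert_of_notMem (by
        simp only [Finset.mem_insert, Finset.mem_singleton]; omega),
      Finset.card_insert_of_notMem (by
        simp only [Finset.mem_singleton]; omega),
      Finset.card_singleton]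
  · -- v = K+3  (d-chain tip)
    right; right
    refine ⟨by omega, ?_⟩
    rw [gdeg_eq, h]
    have he : (Finset.range n).filter (fun w => RelK K (K+3) w ∨ RelK K w (K+3))
        = {0, K+2} := by
      ext w
      simp only [Finset.mem_filter, Finset.mem_range, Finset.mem_insert, Finset.mem_singleton]
      unfold RelK; omega
    rw [he, Finset.card_insert_of_notMem (by
        simp only [Finset.mem_singleton]; omega),
      Finset.card_singleton]
  · -- v = K+4  (s2)
    right; left
    refine ⟨by omega, ?_⟩
    rw [gdeg_eq, h]
    have he : (Finset.range n).filter (fun w => RelK K (K+4) w ∨ RelK K w (K+4))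
        = {0, 1, K+5} := by
      ext w
      simp only [Finset.mem_filter, Finset.mem_range, Finset.mem_insert, Finset.mem_singleton]
      unfold RelK; omega
    rw [he, Finset.card_insert_of_notMem (by
        simp only [Finset.mem_insert, Finset.mem_singleton]; omega),
      Finset.card_insert_of_notMem (by
        simp only [Finset.mem_singleton]; omega),
      Finset.card_singleton]
  · -- K+5 ≤ v ≤ 2K+3  (e-chain interior)
    right; left
    refine ⟨by omega, ?_⟩
    rw [gdeg_eq]
    have he : (Finset.range n).filter (fun w => RelK K v.val w ∨ RelK K w v.val)
        = {1, v.val - 1, v.val + 1} := by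
      ext w
      simp only [Finset.mem_filter, Finset.mem_range, Finset.mem_insert, Finset.mem_singleton]
      unfold RelK; omega
    rw [he, Finset.card_insert_of_notMem (by
        simp only [Finset.mem_insert, Finset.mem_singleton]; omega),
      Finset.card_insert_of_notMem (by
        simp only [Finset.mem_singleton]; omega),
      Finset.card_singleton]
  · -- v = 2K+4  (e-chain tip)
    right; right
    refine ⟨by omega, ?_⟩
    rw [gdeg_eq, h]
    have he : (Finset.range n).filter (fun w => RelK K (2*K+4) w ∨ RelK K w (2*K+4))
        = {1, 2*K+3} := by
      ext w
      simp only [Finset.mem_filter, Finset.mem_range, Finset.mem_insert, Finset.mem_singleton]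
      unfold RelK; omega
    rw [he, Finset.card_insert_of_notMem (by
        simp only [Finset.mem_singleton]; omega),
      Finset.card_singleton]
  · -- 2K+5 ≤ v  (M vertices)
    right; right
    refine ⟨by omega, ?_⟩
    rw [gdeg_eq]
    have he : (Finset.range n).filter (fun w => RelK K v.val w ∨ RelK K w v.val)
        = {0, 1} := by
      ext w
      simp only [Finset.mem_filter, Finset.mem_range, Finset.mem_insert, Finset.mem_singleton]
      unfold RelK; omega
    rw [he]; decide

lemma parentsLemma (K : ℕ) (hK : 2 ≤ K) (t : ℕ) (ht : 3 ≤ t) :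
    ∃ p q : ℕ, p < t ∧ q < t ∧ p ≠ q ∧ (RelK K p q ∨ RelK K q p) ∧
      ∀ m : ℕ, m < t → ((RelK K t m ∨ RelK K m t) ↔ (m = p ∨ m = q)) := by
  rcases (by omega : t = 3 ∨ t = 4 ∨ (5 ≤ t ∧ t ≤ K+3) ∨ t = K+4 ∨
      (K+5 ≤ t ∧ t ≤ 2*K+4) ∨ 2*K+5 ≤ t) with h|h|h|h|h|h
  · exact ⟨0, 2, by omega, by omega, by omega, by unfold RelK; omega,
      fun m hm => by unfold RelK; omega⟩
  · exact ⟨0, 1, by omega, by omega, by omega, by unfold RelK; omega,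
      fun m hm => by unfold RelK; omega⟩
  · exact ⟨0, t-1, by omega, by omega, by omega, by unfold RelK; omega,
      fun m hm => by unfold RelK; omega⟩
  · exact ⟨0, 1, by omega, by omega, by omega, by unfold RelK; omega,
      fun m hm => by unfold RelK; omega⟩
  · exact ⟨1, t-1, by omega, by omega, by omega, by unfold RelK; omega,
      fun m hm => by unfold RelK; omega⟩
  · exact ⟨0, 1, by omega, by omega, by omega, by unfold RelK; omega,
      fun m hm => by unfold RelK; omega⟩

lemma gr_isTwoTree (n K : ℕ) (hK : 2 ≤ K) (h2K : 2*K+5 ≤ n) : IsTwoTree (Gr n K) := by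
  have hc : Fintype.card (Fin n) = n := Fintype.card_fin n
  refine ⟨by rw [hc]; omega, finCongr hc, ?_, ?_⟩
  · intro i j hi hj hij
    have hij' : i.val ≠ j.val := fun h => hij (Fin.ext h)
    rw [gr_adj]
    simp only [finCongr_apply, Fin.coe_cast]
    unfold RelK; omega
  · intro k hk
    obtain ⟨p, q, hp, hq, hpq, hrel, hchar⟩ := parentsLemma K hK k.val hk
    have hkc := k.isLt
    refine ⟨⟨p, by omega⟩, ⟨q, by omega⟩, hp, hq,
      fun h => hpq (congrArg Fin.val h), ?_, ?_⟩
    · rw [gr_adj]; simp only [finCongr_apply, Fin.coe_cast]; exact hrel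
    · intro m hm
      rw [gr_adj]
      simp only [finCongr_apply, Fin.coe_cast, Fin.ext_iff]
      exact hchar m.val hm

lemma adj0_val (K w : ℕ) (hK : 2 ≤ K) :
    (RelK K 0 w ∨ RelK K w 0) ↔ (1 ≤ w ∧ w ≤ K+4 ∨ 2*K+5 ≤ w) := by
  unfold RelK; omega

lemma adj1_val (K w : ℕ) (hK : 2 ≤ K) :
    (RelK K 1 w ∨ RelK K w 1) ↔ (w = 0 ∨ w = 2 ∨ w = 4 ∨ K+4 ≤ w) := by
  unfold RelK; omega

lemma gdeg_core (n K : ℕ) (hK : 2 ≤ K) (h2K : 2*K+5 ≤ n) (v : Fin n) (hv : v.val ≤ 1) :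
    gdeg (Gr n K) v = n-1-K := by
  rcases gdeg_cases n K hK h2K v with ⟨_, h⟩ | ⟨h1, _⟩ | ⟨h1, _⟩
  · exact h
  · omega
  · omega

lemma core_val (n K : ℕ) (hK : 2 ≤ K) (h2K : 2*K+5 ≤ n) (v : Fin n)
    (h : gdeg (Gr n K) v = n-1-K) : v.val ≤ 1 := by
  have hD : K+4 ≤ n-1-K := by omega
  rcases gdeg_cases n K hK h2K v with ⟨h1, _⟩ | ⟨_, h2⟩ | ⟨_, h2⟩
  · exact h1
  · omega
  · omega

lemma gdeg_three (n K : ℕ) (hK : 2 ≤ K) (h2K : 2*K+5 ≤ n) (v : Fin n)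
    (hv : v.val = 2 ∨ v.val = 4 ∨ v.val = K+4) :
    gdeg (Gr n K) v = 3 := by
  rcases gdeg_cases n K hK h2K v with ⟨h1, _⟩ | ⟨_, h⟩ | ⟨h1, _⟩
  · omega
  · exact h
  · omega

theorem stmt13 (n K : ℕ) (hn : 7 ≤ n) (hK1 : 2 ≤ K) (hK2 : K ≤ (n - 5) / 2) :
    ∃ G : SimpleGraph (Fin n),
      IsStrongCentral G 2 (n - 1 - K) ∧ sigmaInv G (n - 1 - K) = 3 := by
  have h2K : 2*K+5 ≤ n := by omega
  have hD : K+4 ≤ n-1-K := by omega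
  refine ⟨Gr n K, ⟨gr_isTwoTree n K hK1 h2K, ?_, ?_, ?_, ?_⟩, ?_⟩
  · -- max degree
    intro v
    rcases gdeg_cases n K hK1 h2K v with ⟨_, h⟩ | ⟨_, h⟩ | ⟨_, h⟩ <;> omega
  · -- exactly two core vertices
    have hset : {v : Fin n | gdeg (Gr n K) v = n-1-K} = {v : Fin n | v.val ≤ 1} := by
      ext v
      simp only [Set.mem_setOf_eq]
      exact ⟨core_val n K hK1 h2K v, gdeg_core n K hK1 h2K v⟩
    rw [hset, ncard_val_eq n (fun m => m ≤ 1)]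
    have he : (Finset.range n).filter (fun m => m ≤ 1) = {0, 1} := by
      ext m
      simp only [Finset.mem_filter, Finset.mem_range, Finset.mem_insert, Finset.mem_singleton]
      omega
    rw [he]; decide
  · -- core vertices adjacent
    intro u v hu hv huv
    have hu' := core_val n K hK1 h2K u hu
    have hv' := core_val n K hK1 h2K v hv
    have huv' : u.val ≠ v.val := fun h => huv (Fin.ext h)
    rw [gr_adj]
    unfold RelK; omega
  · -- tails have degree 2 or 3
    intro v hv
    rcases gdeg_cases n K hK1 h2K v with ⟨_, h⟩ | ⟨_, h⟩ | ⟨_, h⟩ <;> omega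
  · -- sigmaInv = 3
    unfold sigmaInv
    have hset : {s : Fin n | gdeg (Gr n K) s ≠ n-1-K ∧ gdeg (Gr n K) s = 3 ∧
        ∀ c, gdeg (Gr n K) c = n-1-K → (Gr n K).Adj c s}
        = {s : Fin n | s.val = 2 ∨ s.val = 4 ∨ s.val = K+4} := by
      ext s
      simp only [Set.mem_setOf_eq]
      constructor
      · rintro ⟨hne, h3, hadj⟩
        have h0 : RelK K 0 s.val ∨ RelK K s.val 0 :=
          hadj ⟨0, by omega⟩ (gdeg_core n K hK1 h2K _ (Nat.zero_le 1))
        have h1 : RelK K 1 s.val ∨ RelK K s.val 1 :=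
          hadj ⟨1, by omega⟩ (gdeg_core n K hK1 h2K _ (le_refl 1))
        rw [adj0_val K s.val hK1] at h0
        rw [adj1_val K s.val hK1] at h1
        rcases gdeg_cases n K hK1 h2K s with ⟨_, h⟩ | ⟨hval, _⟩ | ⟨_, h⟩
        · omega
        · omega
        · omega
      · intro hs
        have h3 := gdeg_three n K hK1 h2K s hs
        refine ⟨by omega, h3, fun c hc => ?_⟩
        have hc' := core_val n K hK1 h2K c hc
        rw [gr_adj]
        unfold RelK; omega
    rw [hset, ncard_val_eq n (fun m => m = 2 ∨ m = 4 ∨ m = K+4)]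
    have he : (Finset.range n).filter (fun m => m = 2 ∨ m = 4 ∨ m = K+4)
        = {2, 4, K+4} := by
      ext m
      simp only [Finset.mem_filter, Finset.mem_range, Finset.mem_insert, Finset.mem_singleton]
      omega
    rw [he, Finset.card_insert_of_notMem (by
        simp only [Finset.mem_insert, Finset.mem_singleton]; omega),
      Finset.card_insert_of_notMem (by simp only [Finset.mem_singleton]; omega),
      Finset.card_singleton]
end

section
/- For every n ≥ 7, there exist at least n − 5 pairwise non-isomorphic strong 2-central (bicentral) 2-trees on n vertices with tail set {2,3}; that is, the number N_2(n) of isomorphism classes of such graphs satisfies N_2(n) ≥ n − 5. -/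
open SimpleGraph

set_option linter.all false

/-- half of adjacency relation for the parametric 2-tree on `Fin n`,
`n = s + a + b + c + 2`.  Vertices: 0 = hub u, 1 = hub v, pages `2..s+1`,
u-fan1 `s+2..s+a+1`, v-fan `s+a+2..s+a+b+1`, u-fan3 `s+a+b+2..s+a+b+c+1`. -/
def nhalf (s a b c i j : ℕ) : Prop :=
  (i = 0 ∧ (j = 1 ∨ (2 ≤ j ∧ j < s+a+2) ∨ (s+a+b+2 ≤ j ∧ j < s+a+b+c+2) ∨ (j = s+a+2 ∧ 1 ≤ b))) ∨
  (i = 1 ∧ (j = 0 ∨ (2 ≤ j ∧ j < s+2) ∨ (s+a+2 ≤ j ∧ j < s+a+b+2) ∨ (j = s+2 ∧ 1 ≤ a) ∨ (j = s+a+b+2 ∧ 1 ≤ c))) ∨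
  (s+2 ≤ i ∧ j = i+1 ∧ j < s+a+2) ∨
  (s+a+2 ≤ i ∧ j = i+1 ∧ j < s+a+b+2) ∨
  (s+a+b+2 ≤ i ∧ j = i+1 ∧ j < s+a+b+c+2)

def nadj (s a b c i j : ℕ) : Prop := nhalf s a b c i j ∨ nhalf s a b c j i

instance (s a b c i j : ℕ) : Decidable (nhalf s a b c i j) := by unfold nhalf; infer_instance
instance (s a b c i j : ℕ) : Decidable (nadj s a b c i j) := by unfold nadj; infer_instance

def GG (n s a b c : ℕ) : SimpleGraph (Fin n) where
  Adj i j := nadj s a b c i.val j.val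
  symm := ⟨by intro i j h; unfold nadj at *; tauto⟩
  loopless := ⟨by intro i h; unfold nadj nhalf at h; omega⟩

instance (n s a b c : ℕ) : DecidableRel (GG n s a b c).Adj := by
  intro i j; unfold GG; infer_instance

lemma ncard_val {n : ℕ} (S : Set (Fin n)) (F : Finset ℕ)
    (h : ∀ i : Fin n, i ∈ S ↔ i.val ∈ F) (hF : ∀ m ∈ F, m < n) :
    S.ncard = F.card := by
  have himg : Fin.val '' S = (F : Set ℕ) := by
    ext m
    constructor
    · rintro ⟨i, hi, rfl⟩; exact (h i).1 hi
    · intro hm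
      exact ⟨⟨m, hF m hm⟩, (h ⟨m, hF m hm⟩).2 hm, rfl⟩
  calc S.ncard = (Fin.val '' S).ncard := (Set.ncard_image_of_injective S Fin.val_injective).symm
    _ = F.card := by rw [himg, Set.ncard_coe_finset]

lemma gdeg_val {n s a b c : ℕ} (v : Fin n) (F : Finset ℕ)
    (h : ∀ w : Fin n, nadj s a b c v.val w.val ↔ w.val ∈ F) (hF : ∀ m ∈ F, m < n) :
    gdeg (GG n s a b c) v = F.card := by
  apply ncard_val
  · intro i; exact h i
  · exact hF
open Finset

lemma nadj_symm {s a b c i j : ℕ} (h : nadj s a b c i j) : nadj s a b c j i := Or.symm h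

lemma nadj_u {s a b c j : ℕ}
    (h : j = 1 ∨ (2 ≤ j ∧ j < s+a+2) ∨ (s+a+b+2 ≤ j ∧ j < s+a+b+c+2) ∨ (j = s+a+2 ∧ 1 ≤ b)) :
    nadj s a b c 0 j := Or.inl (Or.inl ⟨rfl, h⟩)

lemma nadj_v {s a b c j : ℕ}
    (h : j = 0 ∨ (2 ≤ j ∧ j < s+2) ∨ (s+a+2 ≤ j ∧ j < s+a+b+2) ∨ (j = s+2 ∧ 1 ≤ a) ∨ (j = s+a+b+2 ∧ 1 ≤ c)) :
    nadj s a b c 1 j := Or.inl (Or.inr (Or.inl ⟨rfl, h⟩))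

lemma nadj_c1 {s a b c i : ℕ} (h1 : s+2 ≤ i) (h2 : i+1 < s+a+2) :
    nadj s a b c i (i+1) := Or.inl (Or.inr (Or.inr (Or.inl ⟨h1, rfl, h2⟩)))

lemma nadj_c2 {s a b c i : ℕ} (h1 : s+a+2 ≤ i) (h2 : i+1 < s+a+b+2) :
    nadj s a b c i (i+1) := Or.inl (Or.inr (Or.inr (Or.inr (Or.inl ⟨h1, rfl, h2⟩))))

lemma nadj_c3 {s a b c i : ℕ} (h1 : s+a+b+2 ≤ i) (h2 : i+1 < s+a+b+c+2) :
    nadj s a b c i (i+1) := Or.inl (Or.inr (Or.inr (Or.inr (Or.inr ⟨h1, rfl, h2⟩))))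

/-- chain edge pointing down: `nadj i (i-1)` -/
lemma nadj_d1 {s a b c i : ℕ} (h1 : s+3 ≤ i) (h2 : i < s+a+2) :
    nadj s a b c i (i-1) := by
  have h := nadj_c1 (s := s) (a := a) (b := b) (c := c) (i := i - 1) (by omega) (by omega)
  have e : i - 1 + 1 = i := by omega
  rw [e] at h; exact nadj_symm h

lemma nadj_d2 {s a b c i : ℕ} (h1 : s+a+3 ≤ i) (h2 : i < s+a+b+2) :
    nadj s a b c i (i-1) := by
  have h := nadj_c2 (s := s) (a := a) (b := b) (c := c) (i := i - 1) (by omega) (by omega)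
  have e : i - 1 + 1 = i := by omega
  rw [e] at h; exact nadj_symm h

lemma nadj_d3 {s a b c i : ℕ} (h1 : s+a+b+3 ≤ i) (h2 : i < s+a+b+c+2) :
    nadj s a b c i (i-1) := by
  have h := nadj_c3 (s := s) (a := a) (b := b) (c := c) (i := i - 1) (by omega) (by omega)
  have e : i - 1 + 1 = i := by omega
  rw [e] at h; exact nadj_symm h

section Degrees
variable {n s a b c : ℕ}

lemma deg_u (hn : n = s+a+b+c+2) (v : Fin n) (hv : v.val = 0) :
    gdeg (GG n s a b c) v = 1 + s + a + c + min b 1 := by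
  have h := gdeg_val (s := s) (a := a) (b := b) (c := c) v
    (insert 1 (Ico 2 (s+a+2) ∪ Ico (s+a+b+2) n ∪ Ico (s+a+2) (s+a+2+min b 1)))
    (by
      intro w
      simp only [Finset.mem_insert, Finset.mem_union, Finset.mem_Ico, hv]
      have hw := w.isLt
      constructor
      · rintro ((⟨h0,hh⟩|⟨h0,hh⟩|hh|hh|hh)|(⟨h0,hh⟩|⟨h0,hh⟩|hh|hh|hh)) <;> omega
      · intro h
        exact nadj_u (by omega)
      )
    (by intro m hm; simp only [Finset.mem_insert, Finset.mem_union, Finset.mem_Ico] at hm; omega)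
  rw [h]
  rw [Finset.card_insert_of_notMem (by
    simp only [Finset.mem_union, Finset.mem_Ico]; omega)]
  rw [Finset.card_union_of_disjoint (by
    rw [Finset.disjoint_left]; intro x hx hx'
    simp only [Finset.mem_union, Finset.mem_Ico] at hx hx'; omega)]
  rw [Finset.card_union_of_disjoint (by
    rw [Finset.disjoint_left]; intro x hx hx'
    simp only [Finset.mem_Ico] at hx hx'; omega)]
  rw [Nat.card_Ico, Nat.card_Ico, Nat.card_Ico]
  omega

lemma deg_v (hn : n = s+a+b+c+2) (v : Fin n) (hv : v.val = 1) :
    gdeg (GG n s a b c) v = 1 + s + b + min a 1 + min c 1 := by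
  have h := gdeg_val (s := s) (a := a) (b := b) (c := c) v
    (insert 0 ((Ico 2 (s+2) ∪ Ico (s+a+2) (s+a+b+2)) ∪
      (Ico (s+2) (s+2+min a 1) ∪ Ico (s+a+b+2) (s+a+b+2+min c 1))))
    (by
      intro w
      simp only [Finset.mem_insert, Finset.mem_union, Finset.mem_Ico, hv]
      have hw := w.isLt
      constructor
      · rintro ((⟨h0,hh⟩|⟨h0,hh⟩|hh|hh|hh)|(⟨h0,hh⟩|⟨h0,hh⟩|hh|hh|hh)) <;> omega
      · intro h
        exact nadj_v (by omega)
      )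
    (by intro m hm; simp only [Finset.mem_insert, Finset.mem_union, Finset.mem_Ico] at hm; omega)
  rw [h]
  rw [Finset.card_insert_of_notMem (by
    simp only [Finset.mem_union, Finset.mem_Ico]; omega)]
  rw [Finset.card_union_of_disjoint (by
    rw [Finset.disjoint_left]; intro x hx hx'
    simp only [Finset.mem_union, Finset.mem_Ico] at hx hx'; omega)]
  rw [Finset.card_union_of_disjoint (by
    rw [Finset.disjoint_left]; intro x hx hx'
    simp only [Finset.mem_Ico] at hx hx'; omega)]
  rw [Finset.card_union_of_disjoint (by
    rw [Finset.disjoint_left]; intro x hx hx'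
    simp only [Finset.mem_Ico] at hx hx'; omega)]
  rw [Nat.card_Ico, Nat.card_Ico, Nat.card_Ico, Nat.card_Ico]
  omega

end Degrees
section Tails
variable {n s a b c : ℕ}

lemma deg_page (hn : n = s+a+b+c+2) (v : Fin n) (h2 : 2 ≤ v.val) (hv : v.val < s+2) :
    gdeg (GG n s a b c) v = 2 := by
  have h := gdeg_val (s := s) (a := a) (b := b) (c := c) v ({0, 1} : Finset ℕ)
    (by
      intro w
      simp only [Finset.mem_insert, Finset.mem_singleton]
      constructor
      · rintro ((⟨h0,hh⟩|⟨h0,hh⟩|hh|hh|hh)|(⟨h0,hh⟩|⟨h0,hh⟩|hh|hh|hh)) <;> omega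
      · rintro (hw | hw) <;> rw [hw]
        · exact nadj_symm (nadj_u (by omega))
        · exact nadj_symm (nadj_v (by omega)))
    (by intro m hm; simp only [Finset.mem_insert, Finset.mem_singleton] at hm; omega)
  rw [h]; decide

lemma deg_f1first (hn : n = s+a+b+c+2) (ha : 2 ≤ a) (v : Fin n) (hv : v.val = s+2) :
    gdeg (GG n s a b c) v = 3 := by
  have h := gdeg_val (s := s) (a := a) (b := b) (c := c) v ({0, 1, s+3} : Finset ℕ)
    (by
      intro w
      simp only [Finset.mem_insert, Finset.mem_singleton, hv]
      constructor
      · rintro ((⟨h0,hh⟩|⟨h0,hh⟩|hh|hh|hh)|(⟨h0,hh⟩|⟨h0,hh⟩|hh|hh|hh)) <;> omega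
      · rintro (hw | hw | hw) <;> rw [hw]
        · exact nadj_symm (nadj_u (by omega))
        · exact nadj_symm (nadj_v (by omega))
        · have := nadj_c1 (s := s) (a := a) (b := b) (c := c) (i := s+2) (by omega) (by omega)
          rw [show s+2+1 = s+3 by omega] at this
          exact this)
    (by intro m hm; simp only [Finset.mem_insert, Finset.mem_singleton] at hm; omega)
  rw [h]
  rw [Finset.card_insert_of_notMem (by simp only [Finset.mem_insert, Finset.mem_singleton]; omega)]
  rw [Finset.card_insert_of_notMem (by simp only [Finset.mem_singleton]; omega)]
  simp

lemma deg_f1mid (hn : n = s+a+b+c+2) (v : Fin n) (h1 : s+2 < v.val) (h2 : v.val+1 < s+a+2) :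
    gdeg (GG n s a b c) v = 3 := by
  have h := gdeg_val (s := s) (a := a) (b := b) (c := c) v ({0, v.val-1, v.val+1} : Finset ℕ)
    (by
      intro w
      simp only [Finset.mem_insert, Finset.mem_singleton]
      constructor
      · rintro ((⟨h0,hh⟩|⟨h0,hh⟩|hh|hh|hh)|(⟨h0,hh⟩|⟨h0,hh⟩|hh|hh|hh)) <;> omega
      · rintro (hw | hw | hw) <;> rw [hw]
        · exact nadj_symm (nadj_u (by omega))
        · exact nadj_d1 (by omega) (by omega)
        · exact nadj_c1 (by omega) (by omega))
    (by intro m hm; simp only [Finset.mem_insert, Finset.mem_singleton] at hm; omega)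
  rw [h]
  rw [Finset.card_insert_of_notMem (by simp only [Finset.mem_insert, Finset.mem_singleton]; omega)]
  rw [Finset.card_insert_of_notMem (by simp only [Finset.mem_singleton]; omega)]
  simp

lemma deg_f1last (hn : n = s+a+b+c+2) (ha : 2 ≤ a) (v : Fin n) (hv : v.val = s+a+1) :
    gdeg (GG n s a b c) v = 2 := by
  have h := gdeg_val (s := s) (a := a) (b := b) (c := c) v ({0, s+a} : Finset ℕ)
    (by
      intro w
      simp only [Finset.mem_insert, Finset.mem_singleton, hv]
      constructor
      · rintro ((⟨h0,hh⟩|⟨h0,hh⟩|hh|hh|hh)|(⟨h0,hh⟩|⟨h0,hh⟩|hh|hh|hh)) <;> omega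
      · rintro (hw | hw) <;> rw [hw]
        · exact nadj_symm (nadj_u (by omega))
        · have := nadj_d1 (s := s) (a := a) (b := b) (c := c) (i := v.val) (by omega) (by omega)
          rw [hv, show s+a+1-1 = s+a by omega] at this
          exact this)
    (by intro m hm; simp only [Finset.mem_insert, Finset.mem_singleton] at hm; omega)
  rw [h]
  rw [Finset.card_insert_of_notMem (by simp only [Finset.mem_singleton]; omega)]
  simp

lemma deg_f2first (hn : n = s+a+b+c+2) (hb : 2 ≤ b) (v : Fin n) (hv : v.val = s+a+2) :
    gdeg (GG n s a b c) v = 3 := by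
  have h := gdeg_val (s := s) (a := a) (b := b) (c := c) v ({0, 1, s+a+3} : Finset ℕ)
    (by
      intro w
      simp only [Finset.mem_insert, Finset.mem_singleton, hv]
      constructor
      · rintro ((⟨h0,hh⟩|⟨h0,hh⟩|hh|hh|hh)|(⟨h0,hh⟩|⟨h0,hh⟩|hh|hh|hh)) <;> omega
      · rintro (hw | hw | hw) <;> rw [hw]
        · exact nadj_symm (nadj_u (by omega))
        · exact nadj_symm (nadj_v (by omega))
        · have := nadj_c2 (s := s) (a := a) (b := b) (c := c) (i := s+a+2) (by omega) (by omega)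
          rw [show s+a+2+1 = s+a+3 by omega] at this
          exact this)
    (by intro m hm; simp only [Finset.mem_insert, Finset.mem_singleton] at hm; omega)
  rw [h]
  rw [Finset.card_insert_of_notMem (by simp only [Finset.mem_insert, Finset.mem_singleton]; omega)]
  rw [Finset.card_insert_of_notMem (by simp only [Finset.mem_singleton]; omega)]
  simp

lemma deg_f2mid (hn : n = s+a+b+c+2) (v : Fin n) (h1 : s+a+2 < v.val) (h2 : v.val+1 < s+a+b+2) :
    gdeg (GG n s a b c) v = 3 := by
  have h := gdeg_val (s := s) (a := a) (b := b) (c := c) v ({1, v.val-1, v.val+1} : Finset ℕ)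
    (by
      intro w
      simp only [Finset.mem_insert, Finset.mem_singleton]
      constructor
      · rintro ((⟨h0,hh⟩|⟨h0,hh⟩|hh|hh|hh)|(⟨h0,hh⟩|⟨h0,hh⟩|hh|hh|hh)) <;> omega
      · rintro (hw | hw | hw) <;> rw [hw]
        · exact nadj_symm (nadj_v (by omega))
        · exact nadj_d2 (by omega) (by omega)
        · exact nadj_c2 (by omega) (by omega))
    (by intro m hm; simp only [Finset.mem_insert, Finset.mem_singleton] at hm; omega)
  rw [h]
  rw [Finset.card_insert_of_notMem (by simp only [Finset.mem_insert, Finset.mem_singleton]; omega)]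
  rw [Finset.card_insert_of_notMem (by simp only [Finset.mem_singleton]; omega)]
  simp

lemma deg_f2last (hn : n = s+a+b+c+2) (hb : 2 ≤ b) (v : Fin n) (hv : v.val = s+a+b+1) :
    gdeg (GG n s a b c) v = 2 := by
  have h := gdeg_val (s := s) (a := a) (b := b) (c := c) v ({1, s+a+b} : Finset ℕ)
    (by
      intro w
      simp only [Finset.mem_insert, Finset.mem_singleton, hv]
      constructor
      · rintro ((⟨h0,hh⟩|⟨h0,hh⟩|hh|hh|hh)|(⟨h0,hh⟩|⟨h0,hh⟩|hh|hh|hh)) <;> omega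
      · rintro (hw | hw) <;> rw [hw]
        · exact nadj_symm (nadj_v (by omega))
        · have := nadj_d2 (s := s) (a := a) (b := b) (c := c) (i := v.val) (by omega) (by omega)
          rw [hv, show s+a+b+1-1 = s+a+b by omega] at this
          exact this)
    (by intro m hm; simp only [Finset.mem_insert, Finset.mem_singleton] at hm; omega)
  rw [h]
  rw [Finset.card_insert_of_notMem (by simp only [Finset.mem_singleton]; omega)]
  simp

lemma deg_f3first (hn : n = s+a+b+c+2) (hc : 2 ≤ c) (v : Fin n) (hv : v.val = s+a+b+2) :
    gdeg (GG n s a b c) v = 3 := by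
  have h := gdeg_val (s := s) (a := a) (b := b) (c := c) v ({0, 1, s+a+b+3} : Finset ℕ)
    (by
      intro w
      simp only [Finset.mem_insert, Finset.mem_singleton, hv]
      constructor
      · rintro ((⟨h0,hh⟩|⟨h0,hh⟩|hh|hh|hh)|(⟨h0,hh⟩|⟨h0,hh⟩|hh|hh|hh)) <;> omega
      · rintro (hw | hw | hw) <;> rw [hw]
        · exact nadj_symm (nadj_u (by omega))
        · exact nadj_symm (nadj_v (by omega))
        · have := nadj_c3 (s := s) (a := a) (b := b) (c := c) (i := s+a+b+2) (by omega) (by omega)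
          rw [show s+a+b+2+1 = s+a+b+3 by omega] at this
          exact this)
    (by intro m hm; simp only [Finset.mem_insert, Finset.mem_singleton] at hm; omega)
  rw [h]
  rw [Finset.card_insert_of_notMem (by simp only [Finset.mem_insert, Finset.mem_singleton]; omega)]
  rw [Finset.card_insert_of_notMem (by simp only [Finset.mem_singleton]; omega)]
  simp

lemma deg_f3mid (hn : n = s+a+b+c+2) (v : Fin n) (h1 : s+a+b+2 < v.val) (h2 : v.val+1 < s+a+b+c+2) :
    gdeg (GG n s a b c) v = 3 := by
  have h := gdeg_val (s := s) (a := a) (b := b) (c := c) v ({0, v.val-1, v.val+1} : Finset ℕ)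
    (by
      intro w
      simp only [Finset.mem_insert, Finset.mem_singleton]
      constructor
      · rintro ((⟨h0,hh⟩|⟨h0,hh⟩|hh|hh|hh)|(⟨h0,hh⟩|⟨h0,hh⟩|hh|hh|hh)) <;> omega
      · rintro (hw | hw | hw) <;> rw [hw]
        · exact nadj_symm (nadj_u (by omega))
        · exact nadj_d3 (by omega) (by omega)
        · exact nadj_c3 (by omega) (by omega))
    (by intro m hm; simp only [Finset.mem_insert, Finset.mem_singleton] at hm; omega)
  rw [h]
  rw [Finset.card_insert_of_notMem (by simp only [Finset.mem_insert, Finset.mem_singleton]; omega)]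
  rw [Finset.card_insert_of_notMem (by simp only [Finset.mem_singleton]; omega)]
  simp

lemma deg_f3last (hn : n = s+a+b+c+2) (hc : 2 ≤ c) (v : Fin n) (hv : v.val = s+a+b+c+1) :
    gdeg (GG n s a b c) v = 2 := by
  have h := gdeg_val (s := s) (a := a) (b := b) (c := c) v ({0, s+a+b+c} : Finset ℕ)
    (by
      intro w
      simp only [Finset.mem_insert, Finset.mem_singleton, hv]
      constructor
      · rintro ((⟨h0,hh⟩|⟨h0,hh⟩|hh|hh|hh)|(⟨h0,hh⟩|⟨h0,hh⟩|hh|hh|hh)) <;> omega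
      · rintro (hw | hw) <;> rw [hw]
        · exact nadj_symm (nadj_u (by omega))
        · have := nadj_d3 (s := s) (a := a) (b := b) (c := c) (i := v.val) (by omega) (by omega)
          rw [hv, show s+a+b+c+1-1 = s+a+b+c by omega] at this
          exact this)
    (by intro m hm; simp only [Finset.mem_insert, Finset.mem_singleton] at hm; omega)
  rw [h]
  rw [Finset.card_insert_of_notMem (by simp only [Finset.mem_singleton]; omega)]
  simp

end Tails
section Classify
variable {n s a b c : ℕ}

lemma deg_tail23 (hn : n = s+a+b+c+2) (ha1 : a ≠ 1) (hb1 : b ≠ 1) (hc1 : c ≠ 1)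
    (v : Fin n) (h2v : 2 ≤ v.val) :
    gdeg (GG n s a b c) v = 2 ∨ gdeg (GG n s a b c) v = 3 := by
  have hlt := v.isLt
  have hcases : (v.val < s+2) ∨ (v.val = s+2 ∧ 2 ≤ a) ∨ (s+2 < v.val ∧ v.val+1 < s+a+2) ∨
      (v.val = s+a+1 ∧ 2 ≤ a) ∨ (v.val = s+a+2 ∧ 2 ≤ b) ∨ (s+a+2 < v.val ∧ v.val+1 < s+a+b+2) ∨
      (v.val = s+a+b+1 ∧ 2 ≤ b) ∨ (v.val = s+a+b+2 ∧ 2 ≤ c) ∨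
      (s+a+b+2 < v.val ∧ v.val+1 < s+a+b+c+2) ∨ (v.val = s+a+b+c+1 ∧ 2 ≤ c) := by omega
  rcases hcases with h|h|h|h|h|h|h|h|h|h
  · exact Or.inl (deg_page hn v h2v h)
  · exact Or.inr (deg_f1first hn h.2 v h.1)
  · exact Or.inr (deg_f1mid hn v h.1 h.2)
  · exact Or.inl (deg_f1last hn h.2 v h.1)
  · exact Or.inr (deg_f2first hn h.2 v h.1)
  · exact Or.inr (deg_f2mid hn v h.1 h.2)
  · exact Or.inl (deg_f2last hn h.2 v h.1)
  · exact Or.inr (deg_f3first hn h.2 v h.1)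
  · exact Or.inr (deg_f3mid hn v h.1 h.2)
  · exact Or.inl (deg_f3last hn h.2 v h.1)

lemma core_set_s14 (hn : n = s+a+b+c+2) (ha1 : a ≠ 1) (hb1 : b ≠ 1) (hc1 : c ≠ 1)
    (heq : a + c + min b 1 = b + min a 1 + min c 1)
    (hΔ : 4 ≤ 1+s+a+c+min b 1) (h0n : 0 < n) (h1n : 1 < n) :
    {w : Fin n | gdeg (GG n s a b c) w = 1+s+a+c+min b 1} =
      {(⟨0, h0n⟩ : Fin n), ⟨1, h1n⟩} := by
  ext w
  simp only [Set.mem_setOf_eq, Set.mem_insert_iff, Set.mem_singleton_iff]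
  constructor
  · intro hd
    have hcases : w.val = 0 ∨ w.val = 1 ∨ 2 ≤ w.val := by omega
    rcases hcases with h|h|h
    · exact Or.inl (Fin.ext h)
    · exact Or.inr (Fin.ext h)
    · rcases deg_tail23 hn ha1 hb1 hc1 w h with h'|h' <;> omega
  · rintro (rfl|rfl)
    · exact deg_u hn _ rfl
    · rw [deg_v hn _ rfl]; omega

lemma GG_adj {x y : Fin n} : (GG n s a b c).Adj x y ↔ nadj s a b c x.val y.val := Iff.rfl

lemma twoTree (hn : n = s+a+b+c+2) (h2 : 1 ≤ s + a) (hn3 : 3 ≤ n) :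
    IsTwoTree (GG n s a b c) := by
  constructor
  · simpa using hn3
  refine ⟨finCongr (Fintype.card_fin n), ?_, ?_⟩
  · intro i j hi hj hij
    have hij' : i.val ≠ j.val := fun h => hij (Fin.ext h)
    rw [GG_adj]
    simp only [finCongr_apply, Fin.coe_cast]
    have hcases : (i.val = 0 ∧ j.val = 1) ∨ (i.val = 0 ∧ j.val = 2) ∨ (i.val = 1 ∧ j.val = 0) ∨
        (i.val = 1 ∧ j.val = 2) ∨ (i.val = 2 ∧ j.val = 0) ∨ (i.val = 2 ∧ j.val = 1) := by omega
    rcases hcases with ⟨h1,h2'⟩|⟨h1,h2'⟩|⟨h1,h2'⟩|⟨h1,h2'⟩|⟨h1,h2'⟩|⟨h1,h2'⟩ <;> rw [h1, h2']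
    · exact nadj_u (by omega)
    · exact nadj_u (by omega)
    · exact nadj_symm (nadj_u (by omega))
    · exact nadj_v (by omega)
    · exact nadj_symm (nadj_u (by omega))
    · exact nadj_symm (nadj_v (by omega))
  · intro k hk
    have hlt : k.val < n := by have := k.isLt; simpa using this
    -- helper to build vertices of Fin (Fintype.card (Fin n))
    have hcard : Fintype.card (Fin n) = n := Fintype.card_fin n
    have hcases : (k.val < s+2) ∨ (k.val = s+2 ∧ 1 ≤ a) ∨ (s+2 < k.val ∧ k.val < s+a+2) ∨
        (k.val = s+a+2 ∧ 1 ≤ b) ∨ (s+a+2 < k.val ∧ k.val < s+a+b+2) ∨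
        (k.val = s+a+b+2 ∧ 1 ≤ c) ∨ (s+a+b+2 < k.val ∧ k.val < s+a+b+c+2) := by omega
    have mk0 : Fin (Fintype.card (Fin n)) := ⟨0, by omega⟩
    -- case analysis
    rcases hcases with h|h|h|h|h|h|h
    -- page
    · refine ⟨⟨0, by omega⟩, ⟨1, by omega⟩, by simpa using (by omega : (0:ℕ) < k.val), by simpa using (by omega : (1:ℕ) < k.val), by simp [Fin.ext_iff], ?_, ?_⟩
      · rw [GG_adj]; simp only [finCongr_apply, Fin.coe_cast]
        exact nadj_u (by omega)
      · intro m hm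
        rw [GG_adj]; simp only [finCongr_apply, Fin.coe_cast, Fin.ext_iff]
        constructor
        · rintro ((⟨h0,hh⟩|⟨h0,hh⟩|hh|hh|hh)|(⟨h0,hh⟩|⟨h0,hh⟩|hh|hh|hh)) <;> omega
        · rintro (hw | hw) <;> rw [show m.val = _ from hw]
          · exact nadj_symm (nadj_u (by omega))
          · exact nadj_symm (nadj_v (by omega))
    -- f1 first
    · refine ⟨⟨0, by omega⟩, ⟨1, by omega⟩, by simpa using (by omega : (0:ℕ) < k.val), by simpa using (by omega : (1:ℕ) < k.val), by simp [Fin.ext_iff], ?_, ?_⟩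
      · rw [GG_adj]; simp only [finCongr_apply, Fin.coe_cast]
        exact nadj_u (by omega)
      · intro m hm
        rw [GG_adj]; simp only [finCongr_apply, Fin.coe_cast, Fin.ext_iff]
        constructor
        · rintro ((⟨h0,hh⟩|⟨h0,hh⟩|hh|hh|hh)|(⟨h0,hh⟩|⟨h0,hh⟩|hh|hh|hh)) <;> omega
        · rintro (hw | hw) <;> rw [show m.val = _ from hw]
          · exact nadj_symm (nadj_u (by omega))
          · exact nadj_symm (nadj_v (by omega))
    -- f1 later
    · refine ⟨⟨0, by omega⟩, ⟨k.val - 1, by omega⟩, by simpa using (by omega : (0:ℕ) < k.val), by simpa using (by omega : k.val - 1 < k.val), by simp [Fin.ext_iff]; omega, ?_, ?_⟩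
      · rw [GG_adj]; simp only [finCongr_apply, Fin.coe_cast]
        exact nadj_u (by omega)
      · intro m hm
        rw [GG_adj]; simp only [finCongr_apply, Fin.coe_cast, Fin.ext_iff]
        constructor
        · rintro ((⟨h0,hh⟩|⟨h0,hh⟩|hh|hh|hh)|(⟨h0,hh⟩|⟨h0,hh⟩|hh|hh|hh)) <;> omega
        · rintro (hw | hw) <;> rw [show m.val = _ from hw]
          · exact nadj_symm (nadj_u (by omega))
          · exact nadj_d1 (by omega) (by omega)
    -- f2 first
    · refine ⟨⟨0, by omega⟩, ⟨1, by omega⟩, by simpa using (by omega : (0:ℕ) < k.val), by simpa using (by omega : (1:ℕ) < k.val), by simp [Fin.ext_iff], ?_, ?_⟩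
      · rw [GG_adj]; simp only [finCongr_apply, Fin.coe_cast]
        exact nadj_u (by omega)
      · intro m hm
        rw [GG_adj]; simp only [finCongr_apply, Fin.coe_cast, Fin.ext_iff]
        constructor
        · rintro ((⟨h0,hh⟩|⟨h0,hh⟩|hh|hh|hh)|(⟨h0,hh⟩|⟨h0,hh⟩|hh|hh|hh)) <;> omega
        · rintro (hw | hw) <;> rw [show m.val = _ from hw]
          · exact nadj_symm (nadj_u (by omega))
          · exact nadj_symm (nadj_v (by omega))
    -- f2 later
    · refine ⟨⟨1, by omega⟩, ⟨k.val - 1, by omega⟩, by simpa using (by omega : (1:ℕ) < k.val), by simpa using (by omega : k.val - 1 < k.val), by simp [Fin.ext_iff]; omega, ?_, ?_⟩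
      · rw [GG_adj]; simp only [finCongr_apply, Fin.coe_cast]
        exact nadj_v (by omega)
      · intro m hm
        rw [GG_adj]; simp only [finCongr_apply, Fin.coe_cast, Fin.ext_iff]
        constructor
        · rintro ((⟨h0,hh⟩|⟨h0,hh⟩|hh|hh|hh)|(⟨h0,hh⟩|⟨h0,hh⟩|hh|hh|hh)) <;> omega
        · rintro (hw | hw) <;> rw [show m.val = _ from hw]
          · exact nadj_symm (nadj_v (by omega))
          · exact nadj_d2 (by omega) (by omega)
    -- f3 first
    · refine ⟨⟨0, by omega⟩, ⟨1, by omega⟩, by simpa using (by omega : (0:ℕ) < k.val), by simpa using (by omega : (1:ℕ) < k.val), by simp [Fin.ext_iff], ?_, ?_⟩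
      · rw [GG_adj]; simp only [finCongr_apply, Fin.coe_cast]
        exact nadj_u (by omega)
      · intro m hm
        rw [GG_adj]; simp only [finCongr_apply, Fin.coe_cast, Fin.ext_iff]
        constructor
        · rintro ((⟨h0,hh⟩|⟨h0,hh⟩|hh|hh|hh)|(⟨h0,hh⟩|⟨h0,hh⟩|hh|hh|hh)) <;> omega
        · rintro (hw | hw) <;> rw [show m.val = _ from hw]
          · exact nadj_symm (nadj_u (by omega))
          · exact nadj_symm (nadj_v (by omega))
    -- f3 later
    · refine ⟨⟨0, by omega⟩, ⟨k.val - 1, by omega⟩, by simpa using (by omega : (0:ℕ) < k.val), by simpa using (by omega : k.val - 1 < k.val), by simp [Fin.ext_iff]; omega, ?_, ?_⟩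
      · rw [GG_adj]; simp only [finCongr_apply, Fin.coe_cast]
        exact nadj_u (by omega)
      · intro m hm
        rw [GG_adj]; simp only [finCongr_apply, Fin.coe_cast, Fin.ext_iff]
        constructor
        · rintro ((⟨h0,hh⟩|⟨h0,hh⟩|hh|hh|hh)|(⟨h0,hh⟩|⟨h0,hh⟩|hh|hh|hh)) <;> omega
        · rintro (hw | hw) <;> rw [show m.val = _ from hw]
          · exact nadj_symm (nadj_u (by omega))
          · exact nadj_d3 (by omega) (by omega)

end Classify
section Strong
variable {n s a b c : ℕ}

lemma strong (hn : n = s+a+b+c+2) (ha1 : a ≠ 1) (hb1 : b ≠ 1) (hc1 : c ≠ 1)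
    (h2 : 1 ≤ s + a) (heq : a + c + min b 1 = b + min a 1 + min c 1)
    (hΔ : 4 ≤ 1+s+a+c+min b 1) :
    IsStrongCentral (GG n s a b c) 2 (1+s+a+c+min b 1) := by
  have hn3 : 3 ≤ n := by omega
  have h0n : 0 < n := by omega
  have h1n : 1 < n := by omega
  refine ⟨twoTree hn h2 hn3, ?_, ?_, ?_, ?_⟩
  · intro v
    have hcases : v.val = 0 ∨ v.val = 1 ∨ 2 ≤ v.val := by omega
    rcases hcases with h|h|h
    · rw [deg_u hn v h]
    · rw [deg_v hn v h]; omega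
    · rcases deg_tail23 hn ha1 hb1 hc1 v h with h'|h' <;> omega
  · rw [core_set_s14 hn ha1 hb1 hc1 heq hΔ h0n h1n]
    exact Set.ncard_pair (by simp [Fin.ext_iff])
  · intro x y hx hy hxy
    have hx' : x ∈ ({(⟨0, by omega⟩ : Fin n), ⟨1, by omega⟩} : Set (Fin n)) := by
      rw [← core_set_s14 hn ha1 hb1 hc1 heq hΔ h0n h1n]; exact hx
    have hy' : y ∈ ({(⟨0, by omega⟩ : Fin n), ⟨1, by omega⟩} : Set (Fin n)) := by
      rw [← core_set_s14 hn ha1 hb1 hc1 heq hΔ h0n h1n]; exact hy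
    simp only [Set.mem_insert_iff, Set.mem_singleton_iff] at hx' hy'
    rcases hx' with h|h <;> rcases hy' with h'|h'
    · exact absurd (h.trans h'.symm) hxy
    · have e1 : x.val = 0 := by rw [h]
      have e2 : y.val = 1 := by rw [h']
      rw [GG_adj, e1, e2]; exact nadj_u (by omega)
    · have e1 : x.val = 1 := by rw [h]
      have e2 : y.val = 0 := by rw [h']
      rw [GG_adj, e1, e2]; exact nadj_symm (nadj_u (by omega))
    · exact absurd (h.trans h'.symm) hxy
  · intro v hv
    have hcases : v.val = 0 ∨ v.val = 1 ∨ 2 ≤ v.val := by omega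
    rcases hcases with h|h|h
    · exact absurd (deg_u hn v h) hv
    · exact absurd (by rw [deg_v hn v h]; omega) hv
    · exact deg_tail23 hn ha1 hb1 hc1 v h

end Strong

noncomputable def Jnum {V : Type} [Fintype V] (G : SimpleGraph V) (D : ℕ) : ℕ :=
  ({w | gdeg G w = 2 ∧ ∀ z, gdeg G z = D → G.Adj w z}).ncard

section Jsec
variable {n s a b c : ℕ}

set_option maxHeartbeats 1000000 in
lemma Jnum_GG (hn : n = s+a+b+c+2) (ha1 : a ≠ 1) (hb1 : b ≠ 1) (hc1 : c ≠ 1)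
    (heq : a + c + min b 1 = b + min a 1 + min c 1)
    (hΔ : 4 ≤ 1+s+a+c+min b 1) :
    Jnum (GG n s a b c) (1+s+a+c+min b 1) = s := by
  have h0n : 0 < n := by omega
  have h1n : 1 < n := by omega
  unfold Jnum
  rw [ncard_val _ (Finset.Ico 2 (s+2)) ?mem ?lt]
  · simp
  case lt => intro m hm; simp only [Finset.mem_Ico] at hm; omega
  case mem =>
    intro w
    simp only [Set.mem_setOf_eq, Finset.mem_Ico]
    constructor
    · rintro ⟨hd2, hadj⟩
      by_contra hcon
      have hlt := w.isLt
      have hcases : w.val = 0 ∨ w.val = 1 ∨ (w.val = s+2 ∧ 2 ≤ a) ∨ (s+2 < w.val ∧ w.val+1 < s+a+2) ∨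
          (w.val = s+a+1 ∧ 2 ≤ a) ∨ (w.val = s+a+2 ∧ 2 ≤ b) ∨ (s+a+2 < w.val ∧ w.val+1 < s+a+b+2) ∨
          (w.val = s+a+b+1 ∧ 2 ≤ b) ∨ (w.val = s+a+b+2 ∧ 2 ≤ c) ∨
          (s+a+b+2 < w.val ∧ w.val+1 < s+a+b+c+2) ∨ (w.val = s+a+b+c+1 ∧ 2 ≤ c) := by omega
      rcases hcases with h|h|h|h|h|h|h|h|h|h|h
      · have := deg_u hn w h; omega
      · have := deg_v hn w h; omega
      · have := deg_f1first hn h.2 w h.1; omega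
      · have := deg_f1mid hn w h.1 h.2; omega
      · -- fan1 last : not adjacent to v = 1
        have hz : gdeg (GG n s a b c) (⟨1, h1n⟩ : Fin n) = 1+s+a+c+min b 1 := by
          rw [deg_v hn _ rfl]; omega
        have hadj1 : nadj s a b c w.val 1 := hadj _ hz
        rcases hadj1 with ((⟨h0,hh⟩|⟨h0,hh⟩|hh|hh|hh)|(⟨h0,hh⟩|⟨h0,hh⟩|hh|hh|hh)) <;> omega
      · have := deg_f2first hn h.2 w h.1; omega
      · have := deg_f2mid hn w h.1 h.2; omega
      · -- fan2 last : not adjacent to u = 0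
        have hz : gdeg (GG n s a b c) (⟨0, h0n⟩ : Fin n) = 1+s+a+c+min b 1 :=
          deg_u hn _ rfl
        have hadj1 : nadj s a b c w.val 0 := hadj _ hz
        rcases hadj1 with ((⟨h0,hh⟩|⟨h0,hh⟩|hh|hh|hh)|(⟨h0,hh⟩|⟨h0,hh⟩|hh|hh|hh)) <;> omega
      · have := deg_f3first hn h.2 w h.1; omega
      · have := deg_f3mid hn w h.1 h.2; omega
      · -- fan3 last : not adjacent to v = 1
        have hz : gdeg (GG n s a b c) (⟨1, h1n⟩ : Fin n) = 1+s+a+c+min b 1 := by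
          rw [deg_v hn _ rfl]; omega
        have hadj1 : nadj s a b c w.val 1 := hadj _ hz
        rcases hadj1 with ((⟨h0,hh⟩|⟨h0,hh⟩|hh|hh|hh)|(⟨h0,hh⟩|⟨h0,hh⟩|hh|hh|hh)) <;> omega
    · intro hw
      refine ⟨deg_page hn w hw.1 hw.2, ?_⟩
      intro z hz
      have hz' : z ∈ ({(⟨0, by omega⟩ : Fin n), ⟨1, by omega⟩} : Set (Fin n)) := by
        rw [← core_set_s14 hn ha1 hb1 hc1 heq hΔ h0n h1n]; exact hz
      simp only [Set.mem_insert_iff, Set.mem_singleton_iff] at hz'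
      rcases hz' with h|h
      · have e1 : z.val = 0 := by rw [h]
        rw [GG_adj, e1]; exact nadj_symm (nadj_u (by omega))
      · have e1 : z.val = 1 := by rw [h]
        rw [GG_adj, e1]; exact nadj_symm (nadj_v (by omega))

end Jsec

section Iso
variable {V W : Type} [Fintype V] [Fintype W] {G : SimpleGraph V} {G' : SimpleGraph W}

lemma gdeg_iso (φ : G ≃g G') (v : V) : gdeg G' (φ v) = gdeg G v := by
  unfold gdeg
  rw [← Nat.card_coe_set_eq, ← Nat.card_coe_set_eq]
  exact Nat.card_congr (φ.mapNeighborSet v).symm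

lemma delta_iso (φ : G ≃g G') {D D' : ℕ} (hG : IsStrongCentral G 2 D)
    (hG' : IsStrongCentral G' 2 D') : D = D' := by
  obtain ⟨v, hv⟩ : ({v | gdeg G v = D}).Nonempty :=
    Set.nonempty_of_ncard_ne_zero (by rw [hG.2.2.1]; omega)
  obtain ⟨v', hv'⟩ : ({v | gdeg G' v = D'}).Nonempty :=
    Set.nonempty_of_ncard_ne_zero (by rw [hG'.2.2.1]; omega)
  simp only [Set.mem_setOf_eq] at hv hv'
  have h1 : D ≤ D' := by rw [← hv, ← gdeg_iso φ v]; exact hG'.2.1 _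
  have h2 : D' ≤ D := by rw [← hv', ← gdeg_iso φ.symm v']; exact hG.2.1 _
  omega

lemma Jnum_iso (φ : G ≃g G') (D : ℕ) : Jnum G D = Jnum G' D := by
  unfold Jnum
  have himg : φ '' {w | gdeg G w = 2 ∧ ∀ z, gdeg G z = D → G.Adj w z}
      = {w | gdeg G' w = 2 ∧ ∀ z, gdeg G' z = D → G'.Adj w z} := by
    ext w'
    simp only [Set.mem_image, Set.mem_setOf_eq]
    constructor
    · rintro ⟨w, ⟨hw2, hadj⟩, rfl⟩
      refine ⟨by rw [gdeg_iso φ w]; exact hw2, ?_⟩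
      intro z hz
      have hz2 : gdeg G (φ.symm z) = D := by rw [gdeg_iso φ.symm z]; exact hz
      have h3 := hadj _ hz2
      have h4 : G'.Adj (φ w) (φ (φ.symm z)) := φ.map_adj_iff.mpr h3
      simpa using h4
    · rintro ⟨hw2, hadj⟩
      refine ⟨φ.symm w', ⟨by rw [gdeg_iso φ.symm w']; exact hw2, ?_⟩, by simp⟩
      intro z hz
      have hz2 : gdeg G' (φ z) = D := by rw [gdeg_iso φ z]; exact hz
      have h3 := hadj _ hz2
      have h4 : G'.Adj (φ (φ.symm w')) (φ z) := by simpa using h3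
      exact φ.map_adj_iff.mp h4
  rw [← himg, Set.ncard_image_of_injective _ φ.injective]

end Iso
def ps (n i : ℕ) : ℕ := if i = 0 then n-2 else if i ≤ (n-4)/2 then n-4-2*i else n-5-2*(i-(n-4)/2+1)
def pa (n i : ℕ) : ℕ := if i = 0 then 0 else if i ≤ (n-4)/2 then i+1 else i-(n-4)/2+1
def pb (n i : ℕ) : ℕ := if i = 0 then 0 else if i ≤ (n-4)/2 then i+1 else i-(n-4)/2+2
def pc (n i : ℕ) : ℕ := if i = 0 then 0 else if i ≤ (n-4)/2 then 0 else 2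

lemma params_ok (n i : ℕ) (hn : 7 ≤ n) (hi : i ≤ n-6) :
    n = ps n i + pa n i + pb n i + pc n i + 2 ∧ pa n i ≠ 1 ∧ pb n i ≠ 1 ∧ pc n i ≠ 1 ∧
    1 ≤ ps n i + pa n i ∧
    pa n i + pc n i + min (pb n i) 1 = pb n i + min (pa n i) 1 + min (pc n i) 1 ∧
    4 ≤ 1 + ps n i + pa n i + pc n i + min (pb n i) 1 := by
  unfold ps pa pb pc
  split_ifs with h1 h2 <;> omega

lemma params_distinct (n i j : ℕ) (hn : 7 ≤ n) (hi : i ≤ n-6) (hj : j ≤ n-6) (hne : i ≠ j)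
    (e1 : 1 + ps n i + pa n i + pc n i + min (pb n i) 1
        = 1 + ps n j + pa n j + pc n j + min (pb n j) 1)
    (e2 : ps n i = ps n j) : False := by
  unfold ps pa pb pc at e1
  unfold ps at e2
  split_ifs at e1 e2 <;> omega

theorem stmt14' (n : ℕ) (hn : 7 ≤ n) :
    ∃ Gs : Fin (n - 5) → SimpleGraph (Fin n),
      (∀ i, ∃ Δ, IsStrongCentral (Gs i) 2 Δ) ∧
      ∀ i j, i ≠ j → IsEmpty (Gs i ≃g Gs j) := by
  refine ⟨fun i => GG n (ps n i.val) (pa n i.val) (pb n i.val) (pc n i.val), ?_, ?_⟩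
  · intro i
    have hi : i.val ≤ n - 6 := by have := i.isLt; omega
    obtain ⟨e1,e2,e3,e4,e5,e6,e7⟩ := params_ok n i.val hn hi
    exact ⟨_, strong e1 e2 e3 e4 e5 e6 e7⟩
  · intro i j hne
    constructor
    intro φ
    have hi : i.val ≤ n - 6 := by have := i.isLt; omega
    have hj : j.val ≤ n - 6 := by have := j.isLt; omega
    obtain ⟨e1,e2,e3,e4,e5,e6,e7⟩ := params_ok n i.val hn hi
    obtain ⟨f1,f2,f3,f4,f5,f6,f7⟩ := params_ok n j.val hn hj
    have hSi := strong e1 e2 e3 e4 e5 e6 e7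
    have hSj := strong f1 f2 f3 f4 f5 f6 f7
    have hD := delta_iso φ hSi hSj
    have hJ1 := Jnum_GG e1 e2 e3 e4 e6 e7
    have hJ2 := Jnum_GG f1 f2 f3 f4 f6 f7
    have hJ3 := Jnum_iso φ (1 + ps n i.val + pa n i.val + pc n i.val + min (pb n i.val) 1)
    have hs : ps n i.val = ps n j.val := by
      rw [hJ1] at hJ3
      rw [hD] at hJ3
      rw [hJ2] at hJ3
      exact hJ3
    exact params_distinct n i.val j.val hn hi hj (fun h => hne (Fin.ext h)) hD hs


theorem stmt14 (n : ℕ) (hn : 7 ≤ n) :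
    ∃ Gs : Fin (n - 5) → SimpleGraph (Fin n),
      (∀ i, ∃ Δ, IsStrongCentral (Gs i) 2 Δ) ∧
      ∀ i j, i ≠ j → IsEmpty (Gs i ≃g Gs j) := by
  exact stmt14' n hn
end

section
/- If G is a strong 3-central (tricentral) 2-tree with tail set {2,3}, with x tail vertices of degree 3 and y tail vertices of degree 2, then x + 2y ≡ 0 (mod 3). -/
open SimpleGraph

theorem stmt16 {V : Type} [Fintype V] (G : SimpleGraph V) (Δ : ℕ)
    (h : IsStrongCentral G 3 Δ) :
    (tail3 G Δ + 2 * tail2 G Δ) % 3 = 0 := by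
  classical
  obtain ⟨⟨hn, e, htri, hrec⟩, hmax, hcard, hcore, htail⟩ := h
  -- degree as a filter card over Fin (Fintype.card V)
  have hdeg : ∀ k : Fin (Fintype.card V), gdeg G (e k)
      = (Finset.univ.filter (fun m : Fin (Fintype.card V) => G.Adj (e k) (e m))).card := by
    intro k
    have h1 : (G.neighborSet (e k)).toFinset.card
        = ((G.neighborSet (e k)).toFinset.image e.symm).card :=
      (Finset.card_image_of_injective _ e.symm.injective).symm
    rw [gdeg, Set.ncard_eq_toFinset_card', h1]
    congr 1
    ext m
    simp only [Finset.mem_image, Set.mem_toFinset, SimpleGraph.mem_neighborSet,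
      Finset.mem_filter, Finset.mem_univ, true_and]
    constructor
    · rintro ⟨a, ha, rfl⟩; simpa using ha
    · intro hA; exact ⟨e m, hA, by simp⟩
  set c : Fin (Fintype.card V) → ℕ := fun k =>
    (Finset.univ.filter (fun m : Fin (Fintype.card V) => G.Adj (e k) (e m) ∧ m < k)).card
    with hc
  -- double counting
  have hsplit : ∀ k m : Fin (Fintype.card V), (if G.Adj (e k) (e m) then 1 else 0) =
      (if G.Adj (e k) (e m) ∧ m < k then 1 else 0) +
      (if G.Adj (e k) (e m) ∧ k < m then 1 else 0) := by
    intro k m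
    by_cases hA : G.Adj (e k) (e m)
    · have hne : m ≠ k := by
        rintro rfl; exact G.irrefl hA
      rcases lt_or_gt_of_ne hne with hlt | hlt
      · simp [hA, hlt, hlt.asymm]
      · simp [hA, hlt, hlt.asymm]
    · simp [hA]
  have key : ∑ k : Fin (Fintype.card V), gdeg G (e k) = 2 * ∑ k, c k := by
    calc ∑ k : Fin (Fintype.card V), gdeg G (e k)
        = ∑ k : Fin (Fintype.card V), ∑ m : Fin (Fintype.card V),
            ((if G.Adj (e k) (e m) ∧ m < k then 1 else 0) +
             (if G.Adj (e k) (e m) ∧ k < m then 1 else 0)) := by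
          refine Finset.sum_congr rfl fun k _ => ?_
          rw [hdeg k, Finset.card_filter]
          exact Finset.sum_congr rfl fun m _ => hsplit k m
      _ = (∑ k : Fin (Fintype.card V), ∑ m : Fin (Fintype.card V),
            (if G.Adj (e k) (e m) ∧ m < k then 1 else 0)) +
          (∑ k : Fin (Fintype.card V), ∑ m : Fin (Fintype.card V),
            (if G.Adj (e k) (e m) ∧ k < m then 1 else 0)) := by
          rw [← Finset.sum_add_distrib]
          exact Finset.sum_congr rfl fun k _ => Finset.sum_add_distrib
      _ = (∑ k, c k) + (∑ k, c k) := by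
          congr 1
          · exact Finset.sum_congr rfl fun k _ => (Finset.card_filter _ _).symm
          · rw [Finset.sum_comm]
            refine Finset.sum_congr rfl fun m _ => ?_
            simp only [hc, Finset.card_filter]
            refine Finset.sum_congr rfl fun k _ => ?_
            rw [G.adj_comm]
      _ = 2 * ∑ k, c k := by ring
  -- values of c
  have hcval : ∀ k : Fin (Fintype.card V),
      c k + (if (k : ℕ) = 0 then 2 else if (k : ℕ) = 1 then 1 else 0) = 2 := by
    intro k
    by_cases h0 : (k : ℕ) = 0
    · have hfe : (Finset.univ.filter
          (fun m : Fin (Fintype.card V) => G.Adj (e k) (e m) ∧ m < k)) = ∅ := by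
        refine Finset.filter_false_of_mem fun m _ => ?_
        rintro ⟨-, hm⟩
        rw [Fin.lt_def] at hm; omega
      simp [hc, hfe, h0]
    · by_cases h1 : (k : ℕ) = 1
      · have hfe : (Finset.univ.filter
            (fun m : Fin (Fintype.card V) => G.Adj (e k) (e m) ∧ m < k))
            = {(⟨0, by omega⟩ : Fin (Fintype.card V))} := by
          ext m
          simp only [Finset.mem_filter, Finset.mem_univ, true_and, Finset.mem_singleton]
          constructor
          · rintro ⟨-, hm⟩
            rw [Fin.lt_def] at hm
            rw [Fin.ext_iff]; simp; omega
          · rintro rfl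
            refine ⟨htri k ⟨0, by omega⟩ (by omega) (by simp)
              (Fin.ne_of_val_ne (by simp; omega)), ?_⟩
            rw [Fin.lt_def]; simp; omega
        simp [hc, hfe, h0, h1]
      · by_cases h2 : (k : ℕ) = 2
        · have hfe : (Finset.univ.filter
              (fun m : Fin (Fintype.card V) => G.Adj (e k) (e m) ∧ m < k))
              = {(⟨0, by omega⟩ : Fin (Fintype.card V)),
                 (⟨1, by omega⟩ : Fin (Fintype.card V))} := by
            ext m
            simp only [Finset.mem_filter, Finset.mem_univ, true_and, Finset.mem_insert,
              Finset.mem_singleton]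
            constructor
            · rintro ⟨-, hm⟩
              rw [Fin.lt_def] at hm
              rcases (by omega : (m : ℕ) = 0 ∨ (m : ℕ) = 1) with hv | hv
              · exact Or.inl (by rw [Fin.ext_iff]; simp; omega)
              · exact Or.inr (by rw [Fin.ext_iff]; simp; omega)
            · rintro (rfl | rfl)
              · exact ⟨htri k _ (by omega) (by simp) (Fin.ne_of_val_ne (by simp; omega)),
                  by rw [Fin.lt_def]; simp; omega⟩
              · exact ⟨htri k _ (by omega) (by simp) (Fin.ne_of_val_ne (by simp; omega)),
                  by rw [Fin.lt_def]; simp; omega⟩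
          have hcard2 : (Finset.univ.filter
              (fun m : Fin (Fintype.card V) => G.Adj (e k) (e m) ∧ m < k)).card = 2 := by
            rw [hfe]
            exact Finset.card_pair (Fin.ne_of_val_ne (by simp))
          simp [hc, hcard2, h0, h1, h2]
        · obtain ⟨i, j, hik, hjk, hij, hadjij, hspec⟩ := hrec k (by omega)
          have hfe : (Finset.univ.filter
              (fun m : Fin (Fintype.card V) => G.Adj (e k) (e m) ∧ m < k)) = {i, j} := by
            ext m
            simp only [Finset.mem_filter, Finset.mem_univ, true_and, Finset.mem_insert,
              Finset.mem_singleton]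
            constructor
            · rintro ⟨hA, hm⟩
              rw [Fin.lt_def] at hm
              exact (hspec m hm).mp hA
            · rintro (rfl | rfl)
              · exact ⟨(hspec _ hik).mpr (Or.inl rfl), by rw [Fin.lt_def]; exact hik⟩
              · exact ⟨(hspec _ hjk).mpr (Or.inr rfl), by rw [Fin.lt_def]; exact hjk⟩
          have hcard2 : (Finset.univ.filter
              (fun m : Fin (Fintype.card V) => G.Adj (e k) (e m) ∧ m < k)).card = 2 := by
            rw [hfe]; exact Finset.card_pair hij
          simp [hc, hcard2, h0, h1, h2]
  -- sum of c
  have hsumc : (∑ k, c k) + 3 = 2 * Fintype.card V := by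
    have hg : ∀ k : Fin (Fintype.card V),
        (if (k : ℕ) = 0 then 2 else if (k : ℕ) = 1 then 1 else 0) =
        (if k = (⟨0, by omega⟩ : Fin (Fintype.card V)) then 2 else 0) +
        (if k = (⟨1, by omega⟩ : Fin (Fintype.card V)) then 1 else 0) := by
      intro k
      simp only [Fin.ext_iff]
      split_ifs <;> simp_all
    have h2N : ∑ k : Fin (Fintype.card V),
        (c k + (if (k : ℕ) = 0 then 2 else if (k : ℕ) = 1 then 1 else 0))
        = 2 * Fintype.card V := by
      rw [Finset.sum_congr rfl fun k _ => hcval k]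
      simp [Finset.sum_const, mul_comm]
    rw [Finset.sum_add_distrib] at h2N
    have h3 : ∑ k : Fin (Fintype.card V),
        (if (k : ℕ) = 0 then 2 else if (k : ℕ) = 1 then 1 else 0) = 3 := by
      rw [Finset.sum_congr rfl fun k _ => hg k, Finset.sum_add_distrib]
      simp
    omega
  -- total degree sum
  have htot : ∑ v : V, gdeg G v = 2 * ∑ k, c k := by
    rw [← Equiv.sum_comp e (gdeg G), key]
  -- counting vertices by degree
  have hΔcard : (Finset.univ.filter (fun v => gdeg G v = Δ)).card = 3 := by
    have h' := hcard
    rwa [Set.ncard_eq_toFinset_card', Set.toFinset_setOf] at h'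
  have hx : tail3 G Δ
      = (Finset.univ.filter (fun v => gdeg G v ≠ Δ ∧ gdeg G v = 3)).card := by
    rw [tail3, Set.ncard_eq_toFinset_card', Set.toFinset_setOf]
  have hy : tail2 G Δ
      = (Finset.univ.filter (fun v => gdeg G v ≠ Δ ∧ gdeg G v = 2)).card := by
    rw [tail2, Set.ncard_eq_toFinset_card', Set.toFinset_setOf]
  have hcompl : (Finset.univ.filter (fun v => gdeg G v ≠ Δ)).filter
        (fun v => ¬ gdeg G v = 3)
      = Finset.univ.filter (fun v => gdeg G v ≠ Δ ∧ gdeg G v = 2) := by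
    rw [Finset.filter_filter]
    refine Finset.filter_congr fun v _ => ?_
    constructor
    · rintro ⟨hvΔ, hv3⟩
      exact ⟨hvΔ, (htail v hvΔ).resolve_right hv3⟩
    · rintro ⟨hvΔ, hv2⟩
      exact ⟨hvΔ, by omega⟩
  have hfil3 : (Finset.univ.filter (fun v => gdeg G v ≠ Δ)).filter (fun v => gdeg G v = 3)
      = Finset.univ.filter (fun v => gdeg G v ≠ Δ ∧ gdeg G v = 3) := by
    rw [Finset.filter_filter]
  have hEq : (Finset.univ.filter (fun v => ¬ gdeg G v = Δ))
      = Finset.univ.filter (fun v => gdeg G v ≠ Δ) := rfl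
  -- degree sum decomposition
  have hsum1 : ∑ v : V, gdeg G v = 3 * Δ + (3 * tail3 G Δ + 2 * tail2 G Δ) := by
    rw [← Finset.sum_filter_add_sum_filter_not Finset.univ (fun v => gdeg G v = Δ) (gdeg G)]
    have hA : ∑ v ∈ Finset.univ.filter (fun v => gdeg G v = Δ), gdeg G v = 3 * Δ := by
      rw [Finset.sum_congr rfl fun v hv => (Finset.mem_filter.mp hv).2]
      rw [Finset.sum_const, hΔcard, smul_eq_mul]
    have hB : ∑ v ∈ Finset.univ.filter (fun v => ¬ gdeg G v = Δ), gdeg G v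
        = 3 * tail3 G Δ + 2 * tail2 G Δ := by
      rw [hEq, ← Finset.sum_filter_add_sum_filter_not
        (Finset.univ.filter (fun v => gdeg G v ≠ Δ)) (fun v => gdeg G v = 3) (gdeg G)]
      rw [hfil3, hcompl]
      congr 1
      · rw [Finset.sum_congr rfl fun v hv => (Finset.mem_filter.mp hv).2.2,
          Finset.sum_const, ← hx, smul_eq_mul, mul_comm]
      · rw [Finset.sum_congr rfl fun v hv => (Finset.mem_filter.mp hv).2.2,
          Finset.sum_const, ← hy, smul_eq_mul, mul_comm]
    rw [hA, hB]
  -- vertex count decomposition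
  have hcnt : Fintype.card V = 3 + (tail3 G Δ + tail2 G Δ) := by
    have h1 := Finset.card_filter_add_card_filter_not
      (s := (Finset.univ : Finset V)) (p := fun v => gdeg G v = Δ)
    have h2 := Finset.card_filter_add_card_filter_not
      (s := Finset.univ.filter (fun v => gdeg G v ≠ Δ)) (p := fun v => gdeg G v = 3)
    rw [hfil3, hcompl, ← hx, ← hy] at h2
    rw [hΔcard, hEq] at h1
    have huniv : (Finset.univ : Finset V).card = Fintype.card V := Finset.card_univ
    omega
  have hfinal : 3 * Δ + (3 * tail3 G Δ + 2 * tail2 G Δ) = 2 * ∑ k, c k := by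
    rw [← hsum1, htot]
  omega
end

section
/- Let G be a strong 3-central (tricentral) 2-tree with tail set {2,3} on n ≥ 4 vertices with maximum degree Δ. Then ⌈(n+5)/3⌉ ≤ Δ ≤ min(⌊2n/3⌋, n − 1), and the tail parameters are uniquely determined by x = 2n − 3Δ and y = 3Δ − n − 3. -/
open SimpleGraph

section StmtAux
open Finset
variable {V : Type} [Fintype V] {G : SimpleGraph V}
open Classical

lemma ncard_eq_card_filter (p : V → Prop) [DecidablePred p] :
    {v | p v}.ncard = (univ.filter p).card := by
  rw [Set.ncard_eq_toFinset_card']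
  apply Finset.card_bij (fun w _ => w)
  · intro a ha; simp at ha ⊢; exact ha
  · intro a _ b _ hab; exact hab
  · intro b hb; exact ⟨b, by simp at hb ⊢; exact hb, rfl⟩

lemma gdeg_eq_card (G : SimpleGraph V) (v : V) :
    gdeg G v = (univ.filter (fun w => G.Adj v w)).card := by
  rw [gdeg, Set.ncard_eq_toFinset_card']
  apply Finset.card_bij (fun w _ => w)
  · intro a ha; simp at ha ⊢; exact ha
  · intro a _ b _ hab; exact hab
  · intro b hb; exact ⟨b, by simp at hb ⊢; exact hb, rfl⟩
lemma card_filter_equiv {n : ℕ} (e : Fin n ≃ V) (p : V → Prop) :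
    (univ.filter (fun m : Fin n => p (e m))).card = (univ.filter p).card := by
  apply Finset.card_bij (fun m _ => e m)
  · intro a ha; simp at ha ⊢; exact ha
  · intro a _ b _ hab; exact e.injective hab
  · intro b hb; exact ⟨e.symm b, by simpa using hb, by simp⟩
lemma sum_min_two (N : ℕ) (hN : 3 ≤ N) :
    (∑ k ∈ Finset.range N, min k 2) + 3 = 2 * N := by
  induction N, hN using Nat.le_induction with
  | base => decide
  | succ n hn ih => rw [Finset.sum_range_succ]; omega
lemma earlier_card
    (e : Fin (Fintype.card V) ≃ V)
    (h1 : ∀ i j : Fin (Fintype.card V), i.val < 3 → j.val < 3 → i ≠ j → G.Adj (e i) (e j))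
    (h2 : ∀ k : Fin (Fintype.card V), 3 ≤ k.val →
      ∃ i j : Fin (Fintype.card V), i.val < k.val ∧ j.val < k.val ∧ i ≠ j ∧
        G.Adj (e i) (e j) ∧
        ∀ m : Fin (Fintype.card V), m.val < k.val →
          (G.Adj (e k) (e m) ↔ m = i ∨ m = j))
    (k : Fin (Fintype.card V)) :
    (univ.filter (fun m => G.Adj (e k) (e m) ∧ m.val < k.val)).card = min k.val 2 := by
  rcases lt_or_ge k.val 3 with hk | hk
  · have hNk := k.isLt
    rcases (by omega : k.val = 0 ∨ k.val = 1 ∨ k.val = 2) with hkv | hkv | hkv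
    · have : (univ.filter (fun m => G.Adj (e k) (e m) ∧ m.val < k.val)) = ∅ := by
        ext m; simp only [mem_filter, mem_univ, true_and, Finset.notMem_empty, iff_false]
        rintro ⟨_, hm⟩; omega
      rw [this]; simp; omega
    · have h0 : (0:ℕ) < Fintype.card V := by omega
      have : (univ.filter (fun m => G.Adj (e k) (e m) ∧ m.val < k.val)) = {⟨0, h0⟩} := by
        ext m
        simp only [mem_filter, mem_univ, true_and, Finset.mem_singleton]
        constructor
        · rintro ⟨_, hm⟩; exact Fin.ext (by first | omega | (simp only [Fin.val_mk]; omega))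
        · rintro rfl
          refine ⟨h1 k ⟨0,h0⟩ (by first | omega | (simp only [Fin.val_mk]; omega)) (by first | omega | (simp only [Fin.val_mk]; omega)) (Fin.ne_of_val_ne (by first | omega | (simp only [Fin.val_mk]; omega))), by first | omega | (simp only [Fin.val_mk]; omega)⟩
      rw [this]; simp; omega
    · have h0 : (0:ℕ) < Fintype.card V := by omega
      have h1' : (1:ℕ) < Fintype.card V := by omega
      have : (univ.filter (fun m => G.Adj (e k) (e m) ∧ m.val < k.val))
          = {⟨0, h0⟩, ⟨1, h1'⟩} := by
        ext m
        simp only [mem_filter, mem_univ, true_and, Finset.mem_insert, Finset.mem_singleton]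
        constructor
        · rintro ⟨_, hm⟩
          rcases (by omega : m.val = 0 ∨ m.val = 1) with h | h
          · exact Or.inl (Fin.ext h)
          · exact Or.inr (Fin.ext h)
        · rintro (rfl | rfl)
          · exact ⟨h1 k _ (by omega) (by first | omega | (simp only [Fin.val_mk]; omega)) (Fin.ne_of_val_ne (by first | omega | (simp only [Fin.val_mk]; omega))), by first | omega | (simp only [Fin.val_mk]; omega)⟩
          · exact ⟨h1 k _ (by omega) (by first | omega | (simp only [Fin.val_mk]; omega)) (Fin.ne_of_val_ne (by first | omega | (simp only [Fin.val_mk]; omega))), by first | omega | (simp only [Fin.val_mk]; omega)⟩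
      rw [this]
      rw [Finset.card_insert_of_notMem (by simp), Finset.card_singleton]
      omega
  · obtain ⟨i, j, hi, hj, hij, hadj, hiff⟩ := h2 k hk
    have : (univ.filter (fun m => G.Adj (e k) (e m) ∧ m.val < k.val)) = {i, j} := by
      ext m
      simp only [mem_filter, mem_univ, true_and, Finset.mem_insert, Finset.mem_singleton]
      constructor
      · rintro ⟨ha, hm⟩; exact (hiff m hm).mp ha
      · rintro (rfl | rfl)
        · exact ⟨(hiff m hi).mpr (Or.inl rfl), hi⟩
        · exact ⟨(hiff m hj).mpr (Or.inr rfl), hj⟩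
    rw [this, Finset.card_insert_of_notMem (by simpa using hij), Finset.card_singleton]
    omega
lemma degsum
    (hV : 3 ≤ Fintype.card V)
    (e : Fin (Fintype.card V) ≃ V)
    (h1 : ∀ i j : Fin (Fintype.card V), i.val < 3 → j.val < 3 → i ≠ j → G.Adj (e i) (e j))
    (h2 : ∀ k : Fin (Fintype.card V), 3 ≤ k.val →
      ∃ i j : Fin (Fintype.card V), i.val < k.val ∧ j.val < k.val ∧ i ≠ j ∧
        G.Adj (e i) (e j) ∧
        ∀ m : Fin (Fintype.card V), m.val < k.val →
          (G.Adj (e k) (e m) ↔ m = i ∨ m = j))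
    (hE : ∀ k : Fin (Fintype.card V),
      (univ.filter (fun m => G.Adj (e k) (e m) ∧ m.val < k.val)).card = min k.val 2) :
    (∑ v, gdeg G v) + 6 = 4 * Fintype.card V := by
  have hsum : ∑ v, gdeg G v = ∑ k : Fin (Fintype.card V), gdeg G (e k) :=
    (Equiv.sum_comp e (gdeg G)).symm
  have hsplit : ∀ k : Fin (Fintype.card V), gdeg G (e k)
      = (univ.filter (fun m => G.Adj (e k) (e m) ∧ m.val < k.val)).card
      + (univ.filter (fun m => G.Adj (e k) (e m) ∧ k.val < m.val)).card := by
    intro k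
    rw [gdeg_eq_card, ← card_filter_equiv e (fun w => G.Adj (e k) w)]
    have hd := Finset.card_filter_add_card_filter_not
      (s := univ.filter (fun m : Fin (Fintype.card V) => G.Adj (e k) (e m)))
      (p := fun m => m.val < k.val)
    rw [Finset.filter_filter, Finset.filter_filter] at hd
    rw [← hd]
    congr 2
    apply Finset.filter_congr
    intro m _
    constructor
    · rintro ⟨ha, hm⟩
      refine ⟨ha, ?_⟩
      have : m ≠ k := fun hmk => G.irrefl (by rwa [hmk] at ha)
      have : m.val ≠ k.val := fun hv => this (Fin.ext hv)
      omega
    · rintro ⟨ha, hm⟩; exact ⟨ha, by omega⟩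
  have hswap : (∑ k : Fin (Fintype.card V),
        (univ.filter (fun m => G.Adj (e k) (e m) ∧ k.val < m.val)).card)
      = ∑ k : Fin (Fintype.card V),
        (univ.filter (fun m => G.Adj (e k) (e m) ∧ m.val < k.val)).card := by
    simp only [Finset.card_filter]
    rw [Finset.sum_comm]
    refine Finset.sum_congr rfl fun a _ => Finset.sum_congr rfl fun b _ => ?_
    have : (G.Adj (e b) (e a) ∧ b.val < a.val) ↔ (G.Adj (e a) (e b) ∧ b.val < a.val) := by
      rw [G.adj_comm]
    simp only [this]
  have hEsum : (∑ k : Fin (Fintype.card V),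
      (univ.filter (fun m => G.Adj (e k) (e m) ∧ m.val < k.val)).card) + 3
      = 2 * Fintype.card V := by
    simp only [hE]
    rw [show (∑ k : Fin (Fintype.card V), min k.val 2)
        = ∑ k ∈ Finset.range (Fintype.card V), min k 2 from
      Fin.sum_univ_eq_sum_range (fun k => min k 2) _]
    exact sum_min_two _ hV
  rw [hsum]
  simp only [hsplit]
  rw [Finset.sum_add_distrib, hswap]
  omega

end StmtAux

open Finset in
open Classical in
noncomputable def dAux {V : Type} [Fintype V] (G : SimpleGraph V)
    (e : Fin (Fintype.card V) ≃ V) (t : ℕ) (k : Fin (Fintype.card V)) : ℕ :=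
  (univ.filter (fun m => G.Adj (e k) (e m) ∧ m.val < t)).card


section StmtAux2
open Finset
variable {V : Type} [Fintype V] {G : SimpleGraph V}
open Classical

lemma two_deg2
    (hV4 : 4 ≤ Fintype.card V)
    (e : Fin (Fintype.card V) ≃ V)
    (h1 : ∀ i j : Fin (Fintype.card V), i.val < 3 → j.val < 3 → i ≠ j → G.Adj (e i) (e j))
    (h2 : ∀ k : Fin (Fintype.card V), 3 ≤ k.val →
      ∃ i j : Fin (Fintype.card V), i.val < k.val ∧ j.val < k.val ∧ i ≠ j ∧
        G.Adj (e i) (e j) ∧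
        ∀ m : Fin (Fintype.card V), m.val < k.val →
          (G.Adj (e k) (e m) ↔ m = i ∨ m = j)) :
    ∃ a b : V, a ≠ b ∧ gdeg G a = 2 ∧ gdeg G b = 2 := by
  have key : ∀ t, 4 ≤ t → t ≤ Fintype.card V →
      ∃ a b : Fin (Fintype.card V), a.val < t ∧ b.val < t ∧ a ≠ b ∧ ¬ G.Adj (e a) (e b) ∧
        dAux G e t a = 2 ∧ dAux G e t b = 2 := by
    intro t ht4
    induction t, ht4 using Nat.le_induction with
    | base =>
      intro _
      have h3N : 3 < Fintype.card V := by omega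
      let k3 : Fin (Fintype.card V) := ⟨3, h3N⟩
      have hk3v : k3.val = 3 := rfl
      obtain ⟨i, j, hi, hj, hij, hadj, hiff⟩ := h2 k3 (by omega)
      rw [hk3v] at hi hj
      have hijv : i.val ≠ j.val := fun hh => hij (Fin.ext hh)
      let c : Fin (Fintype.card V) := ⟨3 - i.val - j.val, by omega⟩
      have hcv : c.val = 3 - i.val - j.val := rfl
      have hci : c.val ≠ i.val := by rw [hcv]; omega
      have hcj : c.val ≠ j.val := by rw [hcv]; omega
      have hc3 : c.val < 3 := by rw [hcv]; omega
      have hdc : dAux G e 4 c = 2 := by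
        have : (univ.filter (fun m => G.Adj (e c) (e m) ∧ m.val < 4)) = {i, j} := by
          ext m
          simp only [mem_filter, mem_univ, true_and, Finset.mem_insert, Finset.mem_singleton]
          constructor
          · rintro ⟨ha, hm⟩
            rcases (by omega : m.val = 3 ∨ m.val < 3) with h3 | h3
            · exfalso
              have hmk : m = k3 := Fin.ext (by rw [hk3v]; exact h3)
              rw [hmk] at ha
              rcases (hiff c (by omega)).mp ha.symm with h | h
              · exact hci (by rw [h])
              · exact hcj (by rw [h])
            · have hmc : m.val ≠ c.val := fun hv => G.irrefl (by rwa [Fin.ext hv] at ha)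
              have : m.val = i.val ∨ m.val = j.val := by omega
              rcases this with h | h
              · exact Or.inl (Fin.ext h)
              · exact Or.inr (Fin.ext h)
          · rintro (rfl | rfl)
            · exact ⟨h1 c m hc3 (by omega) (fun hh => hci (by rw [hh])), by omega⟩
            · exact ⟨h1 c m hc3 (by omega) (fun hh => hcj (by rw [hh])), by omega⟩
        rw [dAux]; rw [this]
        rw [Finset.card_insert_of_notMem (by simpa using hij), Finset.card_singleton]
      have hdk : dAux G e 4 k3 = 2 := by
        have : (univ.filter (fun m => G.Adj (e k3) (e m) ∧ m.val < 4)) = {i, j} := by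
          ext m
          simp only [mem_filter, mem_univ, true_and, Finset.mem_insert, Finset.mem_singleton]
          constructor
          · rintro ⟨ha, hm⟩
            rcases (by omega : m.val = 3 ∨ m.val < 3) with h3 | h3
            · exact absurd ha (by rw [show m = k3 from Fin.ext (by rw [hk3v]; exact h3)]; exact G.irrefl)
            · exact (hiff m (by omega)).mp ha
          · rintro (rfl | rfl)
            · exact ⟨(hiff m (by omega)).mpr (Or.inl rfl), by omega⟩
            · exact ⟨(hiff m (by omega)).mpr (Or.inr rfl), by omega⟩
        rw [dAux]; rw [this]
        rw [Finset.card_insert_of_notMem (by simpa using hij), Finset.card_singleton]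
      refine ⟨k3, c, by omega, by omega, ?_, ?_, hdk, hdc⟩
      · intro hh; apply_fun Fin.val at hh; rw [hk3v] at hh; omega
      · intro ha
        rcases (hiff c (by omega)).mp ha with h | h
        · exact hci (by rw [h])
        · exact hcj (by rw [h])
    | succ t ht4 ih =>
      intro ht1N
      obtain ⟨a, b, hat, hbt, hab, hnadj, hda, hdb⟩ := ih (by omega)
      have htN' : t < Fintype.card V := by omega
      let kt : Fin (Fintype.card V) := ⟨t, htN'⟩
      have hktv : kt.val = t := rfl
      obtain ⟨i, j, hi, hj, hij, hadj, hiff⟩ := h2 kt (by omega)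
      rw [hktv] at hi hj
      -- generic facts for w not in {i,j} with w.val < t
      have main : ∀ w : Fin (Fintype.card V), w.val < t → w ≠ i → w ≠ j → dAux G e t w = 2 →
          ∃ a b : Fin (Fintype.card V), a.val < t+1 ∧ b.val < t+1 ∧ a ≠ b ∧ ¬ G.Adj (e a) (e b) ∧
            dAux G e (t+1) a = 2 ∧ dAux G e (t+1) b = 2 := by
        intro w hwt hwi hwj hdw
        have hnadjw : ¬ G.Adj (e kt) (e w) := by
          intro ha
          rcases (hiff w (by omega)).mp ha with h | h
          · exact hwi h
          · exact hwj h
        have hdw' : dAux G e (t+1) w = 2 := by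
          rw [dAux]
          rw [show (univ.filter (fun m => G.Adj (e w) (e m) ∧ m.val < t+1))
              = (univ.filter (fun m => G.Adj (e w) (e m) ∧ m.val < t)) from ?_]
          · exact hdw
          ext m
          simp only [mem_filter, mem_univ, true_and]
          constructor
          · rintro ⟨ha, hm⟩
            refine ⟨ha, ?_⟩
            rcases (by omega : m.val = t ∨ m.val < t) with hmt | hmt
            · exact absurd (ha.symm) (by rw [show m = kt from Fin.ext (by rw [hktv]; exact hmt)] at ha ⊢; exact hnadjw)
            · exact hmt
          · rintro ⟨ha, hm⟩; exact ⟨ha, by omega⟩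
        have hdkt : dAux G e (t+1) kt = 2 := by
          rw [dAux]
          rw [show (univ.filter (fun m => G.Adj (e kt) (e m) ∧ m.val < t+1)) = {i, j} from ?_]
          · rw [Finset.card_insert_of_notMem (by simpa using hij), Finset.card_singleton]
          ext m
          simp only [mem_filter, mem_univ, true_and, Finset.mem_insert, Finset.mem_singleton]
          constructor
          · rintro ⟨ha, hm⟩
            rcases (by omega : m.val = t ∨ m.val < t) with hmt | hmt
            · exact absurd ha (by rw [show m = kt from Fin.ext (by rw [hktv]; exact hmt)]; exact G.irrefl)
            · exact (hiff m (by omega)).mp ha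
          · rintro (rfl | rfl)
            · exact ⟨(hiff m (by omega)).mpr (Or.inl rfl), by omega⟩
            · exact ⟨(hiff m (by omega)).mpr (Or.inr rfl), by omega⟩
        refine ⟨w, kt, by omega, by omega, ?_, ?_, hdw', hdkt⟩
        · intro hh; apply_fun Fin.val at hh; rw [hktv] at hh; omega
        · intro ha; exact hnadjw (ha.symm)
      by_cases ha : a = i ∨ a = j
      · -- use b
        refine main b hbt ?_ ?_ hdb
        · rintro rfl
          rcases ha with rfl | rfl
          · exact hab rfl
          · exact hnadj (hadj.symm)
        · rintro rfl
          rcases ha with rfl | rfl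
          · exact hnadj hadj
          · exact hab rfl
      · push_neg at ha
        exact main a hat ha.1 ha.2 hda
  obtain ⟨a, b, _, _, hab, hnadj, hda, hdb⟩ := key (Fintype.card V) (by omega) le_rfl
  have hfin : ∀ k : Fin (Fintype.card V), gdeg G (e k) = dAux G e (Fintype.card V) k := by
    intro k
    rw [gdeg_eq_card, ← card_filter_equiv e (fun w => G.Adj (e k) w), dAux]
    congr 1
    ext m
    simp only [mem_filter, mem_univ, true_and]
    exact ⟨fun ha => ⟨ha, m.isLt⟩, fun ha => ha.1⟩
  exact ⟨e a, e b, fun hh => hab (e.injective hh), by rw [hfin a]; exact hda,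
    by rw [hfin b]; exact hdb⟩

end StmtAux2

theorem stmt17 {V : Type} [Fintype V] (G : SimpleGraph V) (n Δ : ℕ)
    (hn : 4 ≤ n) (hcard : Fintype.card V = n)
    (h : IsStrongCentral G 3 Δ) :
    ⌈((n : ℚ) + 5) / 3⌉ ≤ (Δ : ℤ) ∧
    (Δ : ℤ) ≤ min ⌊2 * (n : ℚ) / 3⌋ ((n : ℤ) - 1) ∧
    (tail3 G Δ : ℤ) = 2 * (n : ℤ) - 3 * (Δ : ℤ) ∧
    (tail2 G Δ : ℤ) = 3 * (Δ : ℤ) - (n : ℤ) - 3 := by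
  classical
  subst hcard
  obtain ⟨⟨hV3, e, h1, h2⟩, hmax, hcore, hcoreadj, htail⟩ := h
  -- degree sum
  have hdegsum : (∑ v, gdeg G v) + 6 = 4 * Fintype.card V :=
    degsum hV3 e h1 h2 (fun k => earlier_card e h1 h2 k)
  -- partition cardinalities
  have hS : ({v | gdeg G v = Δ} : Set V).ncard
      = (Finset.univ.filter (fun v => gdeg G v = Δ)).card := ncard_eq_card_filter _
  have hX : tail3 G Δ
      = (Finset.univ.filter (fun v => gdeg G v ≠ Δ ∧ gdeg G v = 3)).card :=
    ncard_eq_card_filter _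
  have hY : tail2 G Δ
      = (Finset.univ.filter (fun v => gdeg G v ≠ Δ ∧ gdeg G v = 2)).card :=
    ncard_eq_card_filter _
  set S := Finset.univ.filter (fun v => gdeg G v = Δ) with hSdef
  set X := Finset.univ.filter (fun v => gdeg G v ≠ Δ ∧ gdeg G v = 3) with hXdef
  set Y := Finset.univ.filter (fun v => gdeg G v ≠ Δ ∧ gdeg G v = 2) with hYdef
  have hScard : S.card = 3 := by rw [← hS]; exact hcore
  have hpart : S.card + X.card + Y.card = Fintype.card V := by
    rw [hSdef, hXdef, hYdef, Finset.card_filter, Finset.card_filter, Finset.card_filter,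
      ← Finset.sum_add_distrib, ← Finset.sum_add_distrib]
    rw [show Fintype.card V = ∑ _v : V, 1 from by simp [Finset.card_univ]]
    apply Finset.sum_congr rfl
    intro v _
    by_cases hv : gdeg G v = Δ
    · simp [hv]
    · rcases htail v hv with hv2 | hv3
      · rw [hv2] at hv ⊢; simp [hv]
      · rw [hv3] at hv ⊢; simp [hv]
  have hsum : (∑ v, gdeg G v) = Δ * S.card + 3 * X.card + 2 * Y.card := by
    rw [hSdef, hXdef, hYdef, Finset.card_filter, Finset.card_filter, Finset.card_filter,
      Finset.mul_sum, Finset.mul_sum, Finset.mul_sum,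
      ← Finset.sum_add_distrib, ← Finset.sum_add_distrib]
    apply Finset.sum_congr rfl
    intro v _
    by_cases hv : gdeg G v = Δ
    · simp [hv]
    · rcases htail v hv with hv2 | hv3
      · rw [hv2] at hv ⊢; simp [hv]
      · rw [hv3] at hv ⊢; simp [hv]
  -- Δ ≥ 3
  have hub : (∑ v, gdeg G v) ≤ Fintype.card V * Δ := by
    calc (∑ v, gdeg G v) ≤ ∑ _v : V, Δ := Finset.sum_le_sum (fun v _ => hmax v)
    _ = Fintype.card V * Δ := by rw [Finset.sum_const, Finset.card_univ, smul_eq_mul]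
  have hDelta3 : 3 ≤ Δ := by nlinarith [hn, hdegsum, hub]
  -- two distinct degree-2 vertices → 2 ≤ Y.card
  obtain ⟨a, b, hab, hda, hdb⟩ := two_deg2 hn e h1 h2
  have haY : a ∈ Y := by
    rw [hYdef]; simp only [Finset.mem_filter, Finset.mem_univ, true_and]
    exact ⟨by omega, hda⟩
  have hbY : b ∈ Y := by
    rw [hYdef]; simp only [Finset.mem_filter, Finset.mem_univ, true_and]
    exact ⟨by omega, hdb⟩
  have hY2 : 2 ≤ Y.card := Finset.one_lt_card.mpr ⟨a, haY, b, hbY, hab⟩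
  -- Δ ≤ Fintype.card V - 1
  have hSne : S.Nonempty := Finset.card_pos.mp (by omega)
  obtain ⟨v, hv⟩ := hSne
  have hvΔ : gdeg G v = Δ := by
    rw [hSdef] at hv; simpa using hv
  have hdegle : gdeg G v ≤ Fintype.card V - 1 := by
    rw [gdeg_eq_card]
    have hsub : (Finset.univ.filter (fun w => G.Adj v w)) ⊆ Finset.univ.erase v := by
      intro w hw
      simp only [Finset.mem_filter, Finset.mem_univ, true_and] at hw
      exact Finset.mem_erase.mpr ⟨(G.ne_of_adj hw).symm, Finset.mem_univ w⟩
    calc (Finset.univ.filter (fun w => G.Adj v w)).card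
        ≤ (Finset.univ.erase v).card := Finset.card_le_card hsub
      _ = Fintype.card V - 1 := by rw [Finset.card_erase_of_mem (Finset.mem_univ v), Finset.card_univ]
  have hΔN : Δ ≤ Fintype.card V - 1 := hvΔ ▸ hdegle
  rw [hScard] at hsum
  -- key arithmetic facts
  have keyA : 3 * Δ + X.card = 2 * Fintype.card V := by omega
  have keyB : 3 * Δ = Fintype.card V + 3 + Y.card := by omega
  refine ⟨?_, ?_, ?_, ?_⟩
  · refine Int.ceil_le.mpr ?_
    rw [div_le_iff₀ (by norm_num : (0:ℚ) < 3)]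
    have hq : (Fintype.card V : ℚ) + 5 ≤ 3 * Δ := by exact_mod_cast (by omega : Fintype.card V + 5 ≤ 3 * Δ)
    push_cast
    linarith
  · refine le_min ?_ ?_
    · refine Int.le_floor.mpr ?_
      rw [le_div_iff₀ (by norm_num : (0:ℚ) < 3)]
      have hq : 3 * (Δ : ℚ) ≤ 2 * Fintype.card V := by exact_mod_cast (by omega : 3 * Δ ≤ 2 * Fintype.card V)
      push_cast
      linarith
    · omega
  · rw [hX]; omega
  · rw [hY]; omega
end
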